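/- arXiv:2309.07575 — 6 statements merged into one kernel-verified Lean document; each statement's English description precedes it below -/
import Mathlib

section
/- Let μ be a Borel probability measure on ℝ^n and let D ≥ 0 be a constant. Assume that for μ-almost every x the local dimension d_μ(x) exists and equals D, and that there exist r₀ ∈ (0,1) and a μ-integrable function g: ℝ^n → ℝ such that |log μ(B_r(x))| ≤ g(x)·|log r| for μ-almost every x and every r ∈ (0, r₀). Then the information dimension D_1(μ) exists and D_1(μ) = D. -/
open MeasureTheory Filter Topology Metric Set

noncomputable section

/-- The ratio whose behaviour as `r → 0⁺` defines the generalized dimension of order `q`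
of the measure `ν`, with respect to the family of closed balls `B`.  For `q ≠ 1` it is
`log ∫ ν(B_r(x))^{q-1} dν(x) / ((q-1) log r)`; for `q = 1` it is
`∫ log ν(B_r(x)) dν(x) / log r`. -/
def dimRatio {X : Type*} [MeasurableSpace X] (ν : Measure X)
    (B : X → ℝ → Set X) (q r : ℝ) : ℝ :=
  if q = 1 then (∫ x, Real.log (ν (B x r)).toReal ∂ν) / Real.log r
  else Real.log (∫ x, (ν (B x r)).toReal ^ (q - 1) ∂ν) / ((q - 1) * Real.log r)

/-- The generalized dimension `D_q(ν)` exists and equals `D`. -/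
def HasGenDim {X : Type*} [MeasurableSpace X] (ν : Measure X)
    (B : X → ℝ → Set X) (q D : ℝ) : Prop :=
  Tendsto (dimRatio ν B q) (𝓝[>] (0:ℝ)) (𝓝 D)

/-- The upper generalized dimension `D_q^+(ν)`. -/
def genDimSup {X : Type*} [MeasurableSpace X] (ν : Measure X)
    (B : X → ℝ → Set X) (q : ℝ) : ℝ :=
  limsup (dimRatio ν B q) (𝓝[>] (0:ℝ))

/-- The lower generalized dimension `D_q^-(ν)`. -/
def genDimInf {X : Type*} [MeasurableSpace X] (ν : Measure X)
    (B : X → ℝ → Set X) (q : ℝ) : ℝ :=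
  liminf (dimRatio ν B q) (𝓝[>] (0:ℝ))

/-- The upper local dimension `d_ν^+(x)`. -/
def locDimSup {X : Type*} [MeasurableSpace X] (ν : Measure X)
    (B : X → ℝ → Set X) (x : X) : ℝ :=
  limsup (fun r => Real.log (ν (B x r)).toReal / Real.log r) (𝓝[>] (0:ℝ))

/-- The lower local dimension `d_ν^-(x)`. -/
def locDimInf {X : Type*} [MeasurableSpace X] (ν : Measure X)
    (B : X → ℝ → Set X) (x : X) : ℝ :=
  liminf (fun r => Real.log (ν (B x r)).toReal / Real.log r) (𝓝[>] (0:ℝ))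

/-- The closed Euclidean ball of radius `r` centered at `x` in the product `E × ℝ`,
where `E` carries the Euclidean metric. -/
def prodBall {E : Type*} [PseudoMetricSpace E] (x : E × ℝ) (r : ℝ) : Set (E × ℝ) :=
  {y | Real.sqrt (dist x.1 y.1 ^ 2 + dist x.2 y.2 ^ 2) ≤ r}

/-- The suspension measure on `E × ℝ` built from a base measure `μR` and a roof
function `t`:  `μ_S(A) = (∫ ∫_0^{t(ξ)} 1_A(ξ,s) ds dμR(ξ)) / ∫ t dμR`. -/
def suspension {E : Type*} [MeasurableSpace E] (μR : Measure E) (t : E → ℝ) :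
    Measure (E × ℝ) :=
  (∫⁻ ξ, ENNReal.ofReal (t ξ) ∂μR)⁻¹ •
    ((μR.prod (volume : Measure ℝ)).restrict {p : E × ℝ | 0 ≤ p.2 ∧ p.2 < t p.1})

end

/-- Measurability of `x ↦ μ (closedBall x r)`. -/
lemma measurable_measure_closedBall' {n : ℕ} (μ : Measure (EuclideanSpace ℝ (Fin n)))
    [IsProbabilityMeasure μ] (r : ℝ) :
    Measurable fun x => (μ (Metric.closedBall x r)).toReal := by
  have hs : MeasurableSet {p : EuclideanSpace ℝ (Fin n) × EuclideanSpace ℝ (Fin n) |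
      dist p.2 p.1 ≤ r} := by
    apply measurableSet_le
    · exact (continuous_dist.comp (continuous_snd.prodMk continuous_fst)).measurable
    · exact measurable_const
  have := measurable_measure_prodMk_left (ν := μ) hs
  have heq : ∀ x : EuclideanSpace ℝ (Fin n),
      (Prod.mk x ⁻¹' {p : EuclideanSpace ℝ (Fin n) × EuclideanSpace ℝ (Fin n) |
        dist p.2 p.1 ≤ r}) = Metric.closedBall x r := by
    intro x; ext y; simp [Metric.mem_closedBall]
  simpa [heq] using this.ennreal_toReal

/-- If `μ` is a Borel probability measure on `ℝ^n` whose local dimension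
exists and equals the constant `D` at `μ`-a.e. point, and `|log μ(B_r(x))| ≤ g(x)·|log r|`
for a `μ`-integrable `g`, all `r ∈ (0, r₀)` and `μ`-a.e. `x`, then the information
dimension `D_1(μ)` exists and equals `D`. -/
theorem info_dim_of_exact_dimensional (n : ℕ)
    (μ : Measure (EuclideanSpace ℝ (Fin n))) [IsProbabilityMeasure μ]
    (D : ℝ) (hD : 0 ≤ D)
    (hloc : ∀ᵐ x ∂μ,
      Tendsto (fun r => Real.log (μ (Metric.closedBall x r)).toReal / Real.log r)
        (𝓝[>] (0:ℝ)) (𝓝 D))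
    (r₀ : ℝ) (hr₀ : r₀ ∈ Set.Ioo (0:ℝ) 1)
    (g : EuclideanSpace ℝ (Fin n) → ℝ) (hg : Integrable g μ)
    (hbound : ∀ᵐ x ∂μ, ∀ r ∈ Set.Ioo (0:ℝ) r₀,
      |Real.log (μ (Metric.closedBall x r)).toReal| ≤ g x * |Real.log r|) :
    HasGenDim μ (fun x r => Metric.closedBall x r) 1 D := by
  set F : ℝ → EuclideanSpace ℝ (Fin n) → ℝ :=
    fun r x => Real.log (μ (Metric.closedBall x r)).toReal / Real.log r with hF
  have hIoo : Set.Ioo (0:ℝ) r₀ ∈ 𝓝[>] (0:ℝ) := Ioo_mem_nhdsGT_of_mem ⟨le_rfl, hr₀.1⟩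
  have hmeas : ∀ᶠ r in 𝓝[>] (0:ℝ), AEStronglyMeasurable (F r) μ := by
    filter_upwards with r
    exact (((measurable_measure_closedBall' μ r).log).div_const _).aestronglyMeasurable
  have h_bound : ∀ᶠ r in 𝓝[>] (0:ℝ), ∀ᵐ x ∂μ, ‖F r x‖ ≤ |g x| := by
    filter_upwards [hIoo] with r hr
    filter_upwards [hbound] with x hx
    have hrlog : Real.log r < 0 := Real.log_neg hr.1 (hr.2.trans hr₀.2)
    have h1 : |Real.log (μ (Metric.closedBall x r)).toReal| ≤ g x * |Real.log r| :=
      hx r hr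
    have h2 : (0:ℝ) < |Real.log r| := abs_pos.mpr hrlog.ne
    rw [hF]
    simp only [Real.norm_eq_abs, abs_div]
    rw [div_le_iff₀ h2]
    calc |Real.log (μ (Metric.closedBall x r)).toReal| ≤ g x * |Real.log r| := h1
      _ ≤ |g x| * |Real.log r| := by
          gcongr; exact le_abs_self _
  have h_int : Integrable (fun x => |g x|) μ := hg.abs
  have h_lim : ∀ᵐ x ∂μ, Tendsto (fun r => F r x) (𝓝[>] (0:ℝ)) (𝓝 D) := hloc
  have key : Tendsto (fun r => ∫ x, F r x ∂μ) (𝓝[>] (0:ℝ)) (𝓝 (∫ _, D ∂μ)) :=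
    tendsto_integral_filter_of_dominated_convergence _ hmeas h_bound h_int h_lim
  have hconst : (∫ _, D ∂μ) = D := by simp
  rw [hconst] at key
  refine key.congr (fun r => ?_)
  simp only [HasGenDim, dimRatio, if_pos rfl, hF]
  rw [integral_div]
  simp
end

section
/- Let μ and ν be Borel probability measures on ℝ^n such that ν is absolutely continuous with respect to μ with Radon–Nikodym derivative ρ = dν/dμ satisfying c ≤ ρ ≤ C μ-almost everywhere, for some constants 0 < c ≤ C. Then for every q ≠ 1 one has D_q^+(ν) = D_q^+(μ) and D_q^−(ν) = D_q^−(μ); in particular D_q(ν) exists if and only if D_q(μ) exists, in which case they are equal. -/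
open MeasureTheory Filter Topology Metric Set

lemma sInf_eq_sInf_of_close (S T : Set ℝ)
    (hST : ∀ ε > (0:ℝ), ∀ b ∈ T, b + ε ∈ S) (hTS : ∀ ε > (0:ℝ), ∀ a ∈ S, a + ε ∈ T) :
    sInf S = sInf T := by
  rcases S.eq_empty_or_nonempty with hS | hS
  · rcases T.eq_empty_or_nonempty with hT | hT
    · rw [hS, hT]
    · obtain ⟨b, hb⟩ := hT
      exact absurd (hST 1 one_pos b hb) (by simp [hS])
  rcases T.eq_empty_or_nonempty with hT | hT
  · obtain ⟨a, ha⟩ := hS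
    exact absurd (hTS 1 one_pos a ha) (by simp [hT])
  by_cases hbS : BddBelow S
  · have hbT : BddBelow T := by
      obtain ⟨m, hm⟩ := hbS
      exact ⟨m - 1, fun b hb => by have := hm (hST 1 one_pos b hb); linarith⟩
    have h1 : ∀ ε > (0:ℝ), sInf S ≤ sInf T + ε := by
      intro ε hε
      have : sInf S - ε ≤ sInf T := le_csInf hT fun b hb => by
        have := csInf_le hbS (hST ε hε b hb); linarith
      linarith
    have h2 : ∀ ε > (0:ℝ), sInf T ≤ sInf S + ε := by
      intro ε hε
      have : sInf T - ε ≤ sInf S := le_csInf hS fun a ha => by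
        have := csInf_le hbT (hTS ε hε a ha); linarith
      linarith
    exact le_antisymm (le_of_forall_pos_le_add h1) (le_of_forall_pos_le_add h2)
  · have hbT : ¬ BddBelow T := by
      rintro ⟨m, hm⟩
      exact hbS ⟨m - 1, fun a ha => by have := hm (hTS 1 one_pos a ha); linarith⟩
    rw [Real.sInf_of_not_bddBelow hbS, Real.sInf_of_not_bddBelow hbT]

lemma sSup_eq_sSup_of_close (S T : Set ℝ)
    (hST : ∀ ε > (0:ℝ), ∀ b ∈ T, b - ε ∈ S) (hTS : ∀ ε > (0:ℝ), ∀ a ∈ S, a - ε ∈ T) :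
    sSup S = sSup T := by
  rcases S.eq_empty_or_nonempty with hS | hS
  · rcases T.eq_empty_or_nonempty with hT | hT
    · rw [hS, hT]
    · obtain ⟨b, hb⟩ := hT
      exact absurd (hST 1 one_pos b hb) (by simp [hS])
  rcases T.eq_empty_or_nonempty with hT | hT
  · obtain ⟨a, ha⟩ := hS
    exact absurd (hTS 1 one_pos a ha) (by simp [hT])
  by_cases hbS : BddAbove S
  · have hbT : BddAbove T := by
      obtain ⟨m, hm⟩ := hbS
      exact ⟨m + 1, fun b hb => by have := hm (hST 1 one_pos b hb); linarith⟩
    have h1 : ∀ ε > (0:ℝ), sSup S ≤ sSup T + ε := by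
      intro ε hε
      refine csSup_le hS fun a ha => ?_
      have := le_csSup hbT (hTS ε hε a ha); linarith
    have h2 : ∀ ε > (0:ℝ), sSup T ≤ sSup S + ε := by
      intro ε hε
      refine csSup_le hT fun b hb => ?_
      have := le_csSup hbS (hST ε hε b hb); linarith
    exact le_antisymm (le_of_forall_pos_le_add h1) (le_of_forall_pos_le_add h2)
  · have hbT : ¬ BddAbove T := by
      rintro ⟨m, hm⟩
      exact hbS ⟨m + 1, fun a ha => by have := hm (hTS 1 one_pos a ha); linarith⟩
    rw [Real.sSup_of_not_bddAbove hbS, Real.sSup_of_not_bddAbove hbT]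

lemma limsup_congr_of_tendsto_sub {l : Filter ℝ} {f g : ℝ → ℝ}
    (h : Tendsto (fun x => f x - g x) l (𝓝 0)) :
    limsup f l = limsup g l := by
  rw [Filter.limsup_eq, Filter.limsup_eq]
  apply sInf_eq_sInf_of_close
  · intro ε hε b hb
    have h1 : ∀ᶠ x in l, f x - g x < ε := h.eventually (gt_mem_nhds hε)
    filter_upwards [h1, hb] with x hx1 hx2
    linarith
  · intro ε hε a ha
    have h1 : ∀ᶠ x in l, -ε < f x - g x := h.eventually (lt_mem_nhds (by linarith))
    filter_upwards [h1, ha] with x hx1 hx2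
    linarith

lemma liminf_congr_of_tendsto_sub {l : Filter ℝ} {f g : ℝ → ℝ}
    (h : Tendsto (fun x => f x - g x) l (𝓝 0)) :
    liminf f l = liminf g l := by
  rw [Filter.liminf_eq, Filter.liminf_eq]
  apply sSup_eq_sSup_of_close
  · intro ε hε b hb
    have h1 : ∀ᶠ x in l, -ε < f x - g x := h.eventually (lt_mem_nhds (by linarith))
    filter_upwards [h1, hb] with x hx1 hx2
    linarith
  · intro ε hε a ha
    have h1 : ∀ᶠ x in l, f x - g x < ε := h.eventually (gt_mem_nhds hε)
    filter_upwards [h1, ha] with x hx1 hx2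
    linarith

lemma measurable_measure_closedBall'_s4 {E : Type*} [MeasurableSpace E] [PseudoMetricSpace E]
    [SecondCountableTopology E] [OpensMeasurableSpace E] (μ : Measure E) [SFinite μ] (r : ℝ) :
    Measurable fun x => μ (Metric.closedBall x r) := by
  have hs : MeasurableSet {p : E × E | dist p.2 p.1 ≤ r} :=
    (isClosed_le (continuous_dist.comp (continuous_snd.prodMk continuous_fst)) continuous_const).measurableSet
  have := measurable_measure_prodMk_left (ν := μ) hs
  simpa [Metric.closedBall, Set.preimage, dist_comm] using this

/-- If `ν ≪ μ` with Radon–Nikodym derivative `ρ` satisfying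
`0 < c ≤ ρ ≤ C` `μ`-a.e., then for every `q ≠ 1`, `D_q^+(ν) = D_q^+(μ)` and
`D_q^-(ν) = D_q^-(μ)`; in particular `D_q(ν)` exists iff `D_q(μ)` does, with the
same value. -/
theorem genDim_of_equivalent_density (n : ℕ)
    (μ ν : Measure (EuclideanSpace ℝ (Fin n)))
    [IsProbabilityMeasure μ] [IsProbabilityMeasure ν]
    (ρ : EuclideanSpace ℝ (Fin n) → ℝ) (hρmeas : Measurable ρ)
    (hν : ν = μ.withDensity (fun x => ENNReal.ofReal (ρ x)))
    (c C : ℝ) (hc : 0 < c) (hcC : c ≤ C)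
    (hρ : ∀ᵐ x ∂μ, c ≤ ρ x ∧ ρ x ≤ C)
    (q : ℝ) (hq : q ≠ 1) :
    genDimSup ν (fun x r => Metric.closedBall x r) q
        = genDimSup μ (fun x r => Metric.closedBall x r) q ∧
    genDimInf ν (fun x r => Metric.closedBall x r) q
        = genDimInf μ (fun x r => Metric.closedBall x r) q ∧
    ∀ D : ℝ, (HasGenDim ν (fun x r => Metric.closedBall x r) q D ↔
      HasGenDim μ (fun x r => Metric.closedBall x r) q D) := by
  have hC : 0 < C := lt_of_lt_of_le hc hcC
  have hp : q - 1 ≠ 0 := sub_ne_zero.mpr hq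
  -- constants
  set a : ℝ := min (c ^ (q-1)) (C ^ (q-1)) with ha_def
  set b : ℝ := max (c ^ (q-1)) (C ^ (q-1)) with hb_def
  have ha : 0 < a := lt_min (Real.rpow_pos_of_pos hc _) (Real.rpow_pos_of_pos hC _)
  have hb : 0 < b := lt_of_lt_of_le ha (min_le_max)
  set K : ℝ := max |Real.log (c * a)| |Real.log (C * b)| with hK_def
  have hK0 : 0 ≤ K := le_trans (abs_nonneg _) (le_max_left _ _)
  -- measure comparison on measurable sets
  have hν_le : ∀ s : Set (EuclideanSpace ℝ (Fin n)), MeasurableSet s →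
      ν s ≤ ENNReal.ofReal C * μ s := by
    intro s hs
    rw [hν, withDensity_apply _ hs]
    calc ∫⁻ x in s, ENNReal.ofReal (ρ x) ∂μ
        ≤ ∫⁻ _ in s, ENNReal.ofReal C ∂μ :=
          lintegral_mono_ae (ae_restrict_of_ae (hρ.mono fun x hx => ENNReal.ofReal_le_ofReal hx.2))
      _ = ENNReal.ofReal C * μ s := by rw [setLIntegral_const]
  have hν_ge : ∀ s : Set (EuclideanSpace ℝ (Fin n)), MeasurableSet s →
      ENNReal.ofReal c * μ s ≤ ν s := by
    intro s hs
    rw [hν, withDensity_apply _ hs]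
    calc ENNReal.ofReal c * μ s = ∫⁻ _ in s, ENNReal.ofReal c ∂μ := by rw [setLIntegral_const]
      _ ≤ ∫⁻ x in s, ENNReal.ofReal (ρ x) ∂μ :=
          lintegral_mono_ae (ae_restrict_of_ae (hρ.mono fun x hx => ENNReal.ofReal_le_ofReal hx.1))
  -- toReal comparison on balls
  have hVM : ∀ (r : ℝ) (x : EuclideanSpace ℝ (Fin n)),
      c * (μ (Metric.closedBall x r)).toReal ≤ (ν (Metric.closedBall x r)).toReal ∧
      (ν (Metric.closedBall x r)).toReal ≤ C * (μ (Metric.closedBall x r)).toReal := by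
    intro r x
    constructor
    · have h := ENNReal.toReal_mono (measure_ne_top ν _) (hν_ge (Metric.closedBall x r) measurableSet_closedBall)
      rwa [ENNReal.toReal_mul, ENNReal.toReal_ofReal hc.le] at h
    · have h := ENNReal.toReal_mono
        (ENNReal.mul_ne_top ENNReal.ofReal_ne_top (measure_ne_top μ _))
        (hν_le (Metric.closedBall x r) measurableSet_closedBall)
      rwa [ENNReal.toReal_mul, ENNReal.toReal_ofReal hC.le] at h
  -- pointwise rpow comparison
  have hcomp : ∀ (r : ℝ) (x : EuclideanSpace ℝ (Fin n)),
      a * (μ (Metric.closedBall x r)).toReal ^ (q-1) ≤ (ν (Metric.closedBall x r)).toReal ^ (q-1) ∧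
      (ν (Metric.closedBall x r)).toReal ^ (q-1) ≤ b * (μ (Metric.closedBall x r)).toReal ^ (q-1) := by
    intro r x
    obtain ⟨h1, h2⟩ := hVM r x
    set M := (μ (Metric.closedBall x r)).toReal with hM_def
    set V := (ν (Metric.closedBall x r)).toReal with hV_def
    have hM0 : 0 ≤ M := ENNReal.toReal_nonneg
    have hV0 : 0 ≤ V := ENNReal.toReal_nonneg
    have hMp0 : 0 ≤ M ^ (q-1) := Real.rpow_nonneg hM0 _
    rcases eq_or_lt_of_le hM0 with hMz | hMpos
    · have hVz : V = 0 := le_antisymm (by rw [← hMz] at h2; simpa using h2) hV0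
      rw [← hMz, hVz, Real.zero_rpow hp]
      simp
    · have hVpos : 0 < V := lt_of_lt_of_le (mul_pos hc hMpos) h1
      rcases lt_or_gt_of_ne hp with hplt | hpgt
      · constructor
        · calc a * M ^ (q-1) ≤ C ^ (q-1) * M ^ (q-1) :=
                mul_le_mul_of_nonneg_right (min_le_right _ _) hMp0
            _ = (C * M) ^ (q-1) := (Real.mul_rpow hC.le hM0).symm
            _ ≤ V ^ (q-1) := Real.rpow_le_rpow_of_nonpos hVpos h2 hplt.le
        · calc V ^ (q-1) ≤ (c * M) ^ (q-1) :=
                Real.rpow_le_rpow_of_nonpos (mul_pos hc hMpos) h1 hplt.le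
            _ = c ^ (q-1) * M ^ (q-1) := Real.mul_rpow hc.le hM0
            _ ≤ b * M ^ (q-1) := mul_le_mul_of_nonneg_right (le_max_left _ _) hMp0
      · constructor
        · calc a * M ^ (q-1) ≤ c ^ (q-1) * M ^ (q-1) :=
                mul_le_mul_of_nonneg_right (min_le_left _ _) hMp0
            _ = (c * M) ^ (q-1) := (Real.mul_rpow hc.le hM0).symm
            _ ≤ V ^ (q-1) := Real.rpow_le_rpow (by positivity) h1 hpgt.le
        · calc V ^ (q-1) ≤ (C * M) ^ (q-1) := Real.rpow_le_rpow hV0 h2 hpgt.le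
            _ = C ^ (q-1) * M ^ (q-1) := Real.mul_rpow hC.le hM0
            _ ≤ b * M ^ (q-1) := mul_le_mul_of_nonneg_right (le_max_right _ _) hMp0
  -- the key per-radius bound
  have key : ∀ r : ℝ, r ∈ Set.Ioo (0:ℝ) 1 →
      |dimRatio ν (fun x r => Metric.closedBall x r) q r
        - dimRatio μ (fun x r => Metric.closedBall x r) q r|
      ≤ K / (|q - 1| * (-Real.log r)) := by
    intro r hr
    have hlogr : Real.log r < 0 := Real.log_neg hr.1 hr.2
    have hden : 0 < |q - 1| * (-Real.log r) := mul_pos (abs_pos.mpr hp) (by linarith)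
    have hMm : Measurable fun x => (μ (Metric.closedBall x r)).toReal ^ (q-1) :=
      ((measurable_measure_closedBall'_s4 μ r).ennreal_toReal).pow measurable_const
    have hVm : Measurable fun x => (ν (Metric.closedBall x r)).toReal ^ (q-1) :=
      ((measurable_measure_closedBall'_s4 ν r).ennreal_toReal).pow measurable_const
    have hMnn : ∀ x, 0 ≤ (μ (Metric.closedBall x r)).toReal ^ (q-1) :=
      fun x => Real.rpow_nonneg ENNReal.toReal_nonneg _
    have hVnn : ∀ x, 0 ≤ (ν (Metric.closedBall x r)).toReal ^ (q-1) :=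
      fun x => Real.rpow_nonneg ENNReal.toReal_nonneg _
    -- lintegral comparison
    have h00 : ∀ f : EuclideanSpace ℝ (Fin n) → ENNReal, Measurable f →
        ∫⁻ x, f x ∂ν = ∫⁻ x, ENNReal.ofReal (ρ x) * f x ∂μ := by
      intro f hf
      rw [hν]
      simpa using lintegral_withDensity_eq_lintegral_mul μ hρmeas.ennreal_ofReal hf
    have h0 : ∫⁻ x, ENNReal.ofReal ((ν (Metric.closedBall x r)).toReal ^ (q-1)) ∂ν
        = ∫⁻ x, ENNReal.ofReal (ρ x) *
            ENNReal.ofReal ((ν (Metric.closedBall x r)).toReal ^ (q-1)) ∂μ :=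
      h00 _ hVm.ennreal_ofReal
    have hup : ∫⁻ x, ENNReal.ofReal ((ν (Metric.closedBall x r)).toReal ^ (q-1)) ∂ν
        ≤ ENNReal.ofReal C * (ENNReal.ofReal b *
            ∫⁻ x, ENNReal.ofReal ((μ (Metric.closedBall x r)).toReal ^ (q-1)) ∂μ) := by
      rw [h0]
      calc ∫⁻ x, ENNReal.ofReal (ρ x) *
              ENNReal.ofReal ((ν (Metric.closedBall x r)).toReal ^ (q-1)) ∂μ
          ≤ ∫⁻ x, ENNReal.ofReal C * (ENNReal.ofReal b *
              ENNReal.ofReal ((μ (Metric.closedBall x r)).toReal ^ (q-1))) ∂μ := by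
            refine lintegral_mono_ae (hρ.mono fun x hx => ?_)
            refine mul_le_mul' (ENNReal.ofReal_le_ofReal hx.2) ?_
            rw [← ENNReal.ofReal_mul hb.le]
            exact ENNReal.ofReal_le_ofReal (hcomp r x).2
        _ = ENNReal.ofReal C * (ENNReal.ofReal b *
              ∫⁻ x, ENNReal.ofReal ((μ (Metric.closedBall x r)).toReal ^ (q-1)) ∂μ) := by
            rw [lintegral_const_mul _ (hMm.ennreal_ofReal.const_mul _),
              lintegral_const_mul _ hMm.ennreal_ofReal]
    have hlo : ENNReal.ofReal c * (ENNReal.ofReal a *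
            ∫⁻ x, ENNReal.ofReal ((μ (Metric.closedBall x r)).toReal ^ (q-1)) ∂μ)
        ≤ ∫⁻ x, ENNReal.ofReal ((ν (Metric.closedBall x r)).toReal ^ (q-1)) ∂ν := by
      rw [h0]
      calc ENNReal.ofReal c * (ENNReal.ofReal a *
              ∫⁻ x, ENNReal.ofReal ((μ (Metric.closedBall x r)).toReal ^ (q-1)) ∂μ)
          = ∫⁻ x, ENNReal.ofReal c * (ENNReal.ofReal a *
              ENNReal.ofReal ((μ (Metric.closedBall x r)).toReal ^ (q-1))) ∂μ := by
            rw [lintegral_const_mul _ (hMm.ennreal_ofReal.const_mul _),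
              lintegral_const_mul _ hMm.ennreal_ofReal]
        _ ≤ ∫⁻ x, ENNReal.ofReal (ρ x) *
              ENNReal.ofReal ((ν (Metric.closedBall x r)).toReal ^ (q-1)) ∂μ := by
            refine lintegral_mono_ae (hρ.mono fun x hx => ?_)
            refine mul_le_mul' (ENNReal.ofReal_le_ofReal hx.1) ?_
            rw [← ENNReal.ofReal_mul ha.le]
            exact ENNReal.ofReal_le_ofReal (hcomp r x).1
    have hratν : dimRatio ν (fun x r => Metric.closedBall x r) q r
        = Real.log (∫ x, (ν (Metric.closedBall x r)).toReal ^ (q-1) ∂ν)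
            / ((q - 1) * Real.log r) := by
      simp only [dimRatio, if_neg hq]
    have hratμ : dimRatio μ (fun x r => Metric.closedBall x r) q r
        = Real.log (∫ x, (μ (Metric.closedBall x r)).toReal ^ (q-1) ∂μ)
            / ((q - 1) * Real.log r) := by
      simp only [dimRatio, if_neg hq]
    by_cases hfin : ∫⁻ x, ENNReal.ofReal ((μ (Metric.closedBall x r)).toReal ^ (q-1)) ∂μ = ⊤
    · -- both integrals undefined, both ratios are 0
      have hνinf : ∫⁻ x, ENNReal.ofReal ((ν (Metric.closedBall x r)).toReal ^ (q-1)) ∂ν = ⊤ := by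
        refine eq_top_iff.mpr (le_trans (le_of_eq ?_) hlo)
        rw [hfin, ENNReal.mul_top, ENNReal.mul_top] <;>
          simp [ENNReal.ofReal_eq_zero, not_le, hc, ha, mul_eq_zero]
      have hIμ : ∫ x, (μ (Metric.closedBall x r)).toReal ^ (q-1) ∂μ = 0 := by
        refine integral_undef fun hInt => ?_
        exact absurd hfin ((hasFiniteIntegral_iff_ofReal (ae_of_all _ hMnn)).mp hInt.2).ne
      have hIν : ∫ x, (ν (Metric.closedBall x r)).toReal ^ (q-1) ∂ν = 0 := by
        refine integral_undef fun hInt => ?_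
        exact absurd hνinf ((hasFiniteIntegral_iff_ofReal (ae_of_all _ hVnn)).mp hInt.2).ne
      rw [hratν, hratμ, hIμ, hIν]
      simp only [Real.log_zero, zero_div, sub_zero, abs_zero]
      exact div_nonneg hK0 hden.le
    · have hνfin : ∫⁻ x, ENNReal.ofReal ((ν (Metric.closedBall x r)).toReal ^ (q-1)) ∂ν ≠ ⊤ := by
        refine ne_top_of_le_ne_top ?_ hup
        exact ENNReal.mul_ne_top ENNReal.ofReal_ne_top
          (ENNReal.mul_ne_top ENNReal.ofReal_ne_top hfin)
      have hIμeq : ∫ x, (μ (Metric.closedBall x r)).toReal ^ (q-1) ∂μ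
          = (∫⁻ x, ENNReal.ofReal ((μ (Metric.closedBall x r)).toReal ^ (q-1)) ∂μ).toReal :=
        integral_eq_lintegral_of_nonneg_ae (ae_of_all _ hMnn) hMm.aestronglyMeasurable
      have hIνeq : ∫ x, (ν (Metric.closedBall x r)).toReal ^ (q-1) ∂ν
          = (∫⁻ x, ENNReal.ofReal ((ν (Metric.closedBall x r)).toReal ^ (q-1)) ∂ν).toReal :=
        integral_eq_lintegral_of_nonneg_ae (ae_of_all _ hVnn) hVm.aestronglyMeasurable
      set Iμ := ∫ x, (μ (Metric.closedBall x r)).toReal ^ (q-1) ∂μ with hIμ_def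
      set Iν := ∫ x, (ν (Metric.closedBall x r)).toReal ^ (q-1) ∂ν with hIν_def
      have hIμ0 : 0 ≤ Iμ := by
        rw [hIμeq]; exact ENNReal.toReal_nonneg
      have hIνup : Iν ≤ C * (b * Iμ) := by
        rw [hIμeq, hIνeq]
        have := ENNReal.toReal_mono (ENNReal.mul_ne_top ENNReal.ofReal_ne_top
          (ENNReal.mul_ne_top ENNReal.ofReal_ne_top hfin)) hup
        rwa [ENNReal.toReal_mul, ENNReal.toReal_mul, ENNReal.toReal_ofReal hC.le,
          ENNReal.toReal_ofReal hb.le] at this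
      have hIνlo : c * (a * Iμ) ≤ Iν := by
        rw [hIμeq, hIνeq]
        have := ENNReal.toReal_mono hνfin hlo
        rwa [ENNReal.toReal_mul, ENNReal.toReal_mul, ENNReal.toReal_ofReal hc.le,
          ENNReal.toReal_ofReal ha.le] at this
      rcases eq_or_lt_of_le hIμ0 with hIμz | hIμpos
      · have hIνz : Iν = 0 := le_antisymm (by rw [← hIμz] at hIνup; simpa using hIνup)
          (le_trans (by rw [← hIμz]; simp) hIνlo)
        rw [hratν, hratμ, ← hIμz, hIνz]
        simp only [Real.log_zero, zero_div, sub_zero, abs_zero]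
        exact div_nonneg hK0 hden.le
      · have hIνpos : 0 < Iν := lt_of_lt_of_le (by positivity) hIνlo
        have hlog1 : Real.log Iν - Real.log Iμ ≤ Real.log (C * b) := by
          have h1 : Real.log Iν ≤ Real.log (C * b) + Real.log Iμ := by
            calc Real.log Iν ≤ Real.log (C * b * Iμ) := by
                  refine Real.log_le_log hIνpos ?_
                  rw [mul_assoc]; exact hIνup
              _ = Real.log (C * b) + Real.log Iμ :=
                  Real.log_mul (by positivity) hIμpos.ne'
          linarith
        have hlog2 : Real.log (c * a) ≤ Real.log Iν - Real.log Iμ := by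
          have h1 : Real.log (c * a) + Real.log Iμ ≤ Real.log Iν := by
            calc Real.log (c * a) + Real.log Iμ = Real.log (c * a * Iμ) :=
                  (Real.log_mul (by positivity) hIμpos.ne').symm
              _ ≤ Real.log Iν := by
                  refine Real.log_le_log (by positivity) ?_
                  rw [mul_assoc]; exact hIνlo
          linarith
        have habs : |Real.log Iν - Real.log Iμ| ≤ K := by
          rw [abs_le]
          constructor
          · have : -K ≤ Real.log (c * a) :=
              le_trans (neg_le_neg (le_max_left |Real.log (c * a)| _)) (neg_abs_le _)
            linarith
          · exact le_trans hlog1 (le_trans (le_abs_self _) (le_max_right _ _))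
        rw [hratν, hratμ, div_sub_div_same, abs_div, abs_mul, abs_of_neg hlogr]
        gcongr
  -- conclusion
  have hdiff : Tendsto (fun r => dimRatio ν (fun x r => Metric.closedBall x r) q r
      - dimRatio μ (fun x r => Metric.closedBall x r) q r) (𝓝[>] (0:ℝ)) (𝓝 0) := by
    have hbound : Tendsto (fun r : ℝ => K / (|q - 1| * (-Real.log r))) (𝓝[>] (0:ℝ)) (𝓝 0) := by
      apply Tendsto.div_atTop (tendsto_const_nhds)
      exact (tendsto_neg_atBot_atTop.comp
        Real.tendsto_log_nhdsGT_zero).const_mul_atTop (abs_pos.mpr hp)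
    refine squeeze_zero_norm' ?_ hbound
    filter_upwards [Ioo_mem_nhdsGT (zero_lt_one)] with r hr
    rw [Real.norm_eq_abs]
    exact key r hr
  refine ⟨limsup_congr_of_tendsto_sub hdiff, liminf_congr_of_tendsto_sub hdiff, ?_⟩
  intro D
  unfold HasGenDim
  constructor
  · intro h
    have h2 := h.sub hdiff
    simp only [sub_sub_cancel, sub_zero] at h2
    exact h2
  · intro h
    have h2 := h.add hdiff
    simp only [add_sub_cancel, sub_zero, add_zero] at h2
    exact h2
end

section
/- Let μ_R be a Borel probability measure on ℝ^n with compact support, let 0 < κ < 1, and let 𝔱 be a measurable function with κ ≤ 𝔱 ≤ 1/κ. Define ν_R(A) := (∫_A 𝔱 dμ_R) / ∫𝔱 dμ_R. Let q ≠ 1 and suppose D_q(ν_R) exists. Then for every constant c > 1, lim_{r→0⁺} [log( (2cr)^{q−1} ∫ (𝔱(ξ)/(∫𝔱 dμ_R)^q) · μ_R(B_{cr}(ξ))^{q−1} dμ_R(ξ) )] / log r = (q−1)·D_q(ν_R) + (q−1), and the same limit holds with c replaced by c^{−1}. -/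
open MeasureTheory Filter Topology Metric Set

open scoped ENNReal NNReal

section AuxLemmas

variable {n : ℕ}

local notation "E" => EuclideanSpace ℝ (Fin n)

lemma aux_measurable_closedBall (μ : Measure E) [SFinite μ] (s : ℝ) :
    Measurable (fun x : E => μ (closedBall x s)) := by
  have hs : MeasurableSet {p : E × E | dist p.2 p.1 ≤ s} :=
    (isClosed_le (continuous_snd.dist continuous_fst) continuous_const).measurableSet
  have h := measurable_measure_prodMk_left (ν := μ) hs
  convert h using 2 with x
  rfl

lemma aux_ae_ball_lb (μ : Measure E) [IsProbabilityMeasure μ]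
    {S : Set E} (hS : IsCompact S) (hSfull : μ Sᶜ = 0) {s : ℝ} (hs : 0 < s) :
    ∃ m : ℝ, 0 < m ∧ ∀ᵐ x ∂μ, ENNReal.ofReal m ≤ μ (closedBall x s) := by
  obtain ⟨F, hF⟩ := hS.elim_finite_subcover (fun x : E => ball x (s / 2))
    (fun _ => isOpen_ball) (fun x hx => mem_iUnion.2 ⟨x, mem_ball_self (half_pos hs)⟩)
  classical
  set F' := F.filter (fun y => μ (ball y (s / 2)) ≠ 0) with hF'
  have hnull : μ (⋃ y ∈ (↑(F \ F') : Set E), ball y (s / 2)) = 0 := by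
    rw [measure_biUnion_null_iff (F \ F' : Finset E).countable_toSet]
    intro y hy
    simp only [Finset.mem_coe, Finset.mem_sdiff, hF', Finset.mem_filter, not_and, not_not] at hy
    exact hy.2 hy.1
  have hae : ∀ᵐ x ∂μ, x ∈ S ∧ x ∉ ⋃ y ∈ (↑(F \ F') : Set E), ball y (s / 2) := by
    have h1 : ∀ᵐ x ∂μ, x ∈ S := by
      have := measure_eq_zero_iff_ae_notMem.mp hSfull
      filter_upwards [this] with x hx using not_not.mp hx
    have h2 : ∀ᵐ x ∂μ, x ∉ ⋃ y ∈ (↑(F \ F') : Set E), ball y (s / 2) :=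
      measure_eq_zero_iff_ae_notMem.mp hnull
    exact h1.and h2
  have hwitness : ∀ᵐ x ∂μ, ∃ y ∈ F', x ∈ ball y (s / 2) := by
    filter_upwards [hae] with x ⟨hxS, hxU⟩
    obtain ⟨y, hyF, hxy⟩ := mem_iUnion₂.1 (hF hxS)
    refine ⟨y, ?_, hxy⟩
    by_contra hyF'
    exact hxU (mem_iUnion₂.2 ⟨y, Finset.mem_coe.mpr (Finset.mem_sdiff.2 ⟨hyF, hyF'⟩), hxy⟩)
  rcases F'.eq_empty_or_nonempty with hFe | hFne
  · exfalso
    have : ∀ᵐ x ∂μ, False := by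
      filter_upwards [hwitness] with x ⟨y, hy, _⟩
      simp [hFe] at hy
    have h0 : μ univ = 0 := by
      simpa using ae_iff.1 this
    simp [measure_univ] at h0
  · set m' : ℝ≥0∞ := F'.inf' hFne (fun y => μ (ball y (s / 2))) with hm'
    have hm'pos : 0 < m' := by
      rw [hm', Finset.lt_inf'_iff]
      intro y hy
      have : μ (ball y (s / 2)) ≠ 0 := (Finset.mem_filter.1 hy).2
      exact this.bot_lt
    have hm'ne : m' ≠ ⊤ := by
      obtain ⟨y, hy⟩ := hFne
      exact ne_top_of_le_ne_top (measure_ne_top μ _) (Finset.inf'_le _ hy)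
    refine ⟨m'.toReal, ENNReal.toReal_pos hm'pos.ne' hm'ne, ?_⟩
    filter_upwards [hwitness] with x ⟨y, hy, hxy⟩
    have hsub : ball y (s / 2) ⊆ closedBall x s := by
      intro z hz
      have : dist z x ≤ dist z y + dist y x := dist_triangle z y x
      have h1 : dist z y < s / 2 := mem_ball.1 hz
      have h2 : dist y x < s / 2 := by
        rw [dist_comm]
        exact mem_ball.1 hxy
      exact mem_closedBall.2 (by linarith)
    calc ENNReal.ofReal m'.toReal = m' := ENNReal.ofReal_toReal hm'ne
      _ ≤ μ (ball y (s / 2)) := Finset.inf'_le _ hy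
      _ ≤ μ (closedBall x s) := measure_mono hsub

lemma aux_rpow_bounds {ε x p : ℝ} (hε : 0 < ε) (h1 : ε ≤ x) (h2 : x ≤ 1) :
    x ^ p ≤ max (ε ^ p) 1 ∧ min (ε ^ p) 1 ≤ x ^ p := by
  have hx : 0 < x := lt_of_lt_of_le hε h1
  rcases le_or_gt 0 p with hp | hp
  · constructor
    · exact le_trans (Real.rpow_le_one hx.le h2 hp) (le_max_right _ _)
    · exact le_trans (min_le_left _ _) (Real.rpow_le_rpow hε.le h1 hp)
  · constructor
    · exact le_trans (Real.rpow_le_rpow_of_nonpos hε h1 hp.le) (le_max_left _ _)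
    · refine le_trans (min_le_right _ _) ?_
      have := Real.rpow_le_rpow_of_nonpos hx h2 hp.le
      simpa using this


lemma aux_tendsto {P Q : ℝ → ℝ} {q Dq c' a₀ b₀ : ℝ} (hq1 : q ≠ 1) (hc' : 0 < c')
    (ha₀ : 0 < a₀) (hb₀ : 0 < b₀)
    (hP : ∀ s, 0 < s → 0 < P s)
    (hQa : ∀ s, 0 < s → a₀ * P s ≤ Q s) (hQb : ∀ s, 0 < s → Q s ≤ b₀ * P s)
    (hdim : Tendsto (fun r => Real.log (P r) / ((q - 1) * Real.log r)) (𝓝[>] (0:ℝ)) (𝓝 Dq)) :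
    Tendsto (fun r => Real.log ((2 * c' * r) ^ (q - 1) * Q (c' * r)) / Real.log r)
      (𝓝[>] (0:ℝ)) (𝓝 ((q - 1) * Dq + (q - 1))) := by
  have hq0 : q - 1 ≠ 0 := sub_ne_zero.2 hq1
  have hQ : ∀ s, 0 < s → 0 < Q s := fun s hs =>
    lt_of_lt_of_le (mul_pos ha₀ (hP s hs)) (hQa s hs)
  set C := max |Real.log a₀| |Real.log b₀| with hCdef
  have hC : ∀ s, 0 < s → |Real.log (Q s) - Real.log (P s)| ≤ C := by
    intro s hs
    rw [abs_le]
    constructor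
    · have h1 : Real.log (a₀ * P s) ≤ Real.log (Q s) :=
        Real.log_le_log (mul_pos ha₀ (hP s hs)) (hQa s hs)
      rw [Real.log_mul ha₀.ne' (hP s hs).ne'] at h1
      have h2 : -C ≤ Real.log a₀ :=
        neg_le.2 (le_trans (neg_le_abs _) (le_max_left _ _))
      linarith
    · have h1 : Real.log (Q s) ≤ Real.log (b₀ * P s) :=
        Real.log_le_log (hQ s hs) (hQb s hs)
      rw [Real.log_mul hb₀.ne' (hP s hs).ne'] at h1
      have h2 : Real.log b₀ ≤ C := le_trans (le_abs_self _) (le_max_right _ _)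
      linarith
  have hCnn : 0 ≤ C := le_trans (abs_nonneg _) (le_max_left _ _)
  -- (log r)⁻¹ → 0
  have hloginv : Tendsto (fun r : ℝ => (Real.log r)⁻¹) (𝓝[>] (0:ℝ)) (𝓝 0) := by
    have h1 : Tendsto (fun r : ℝ => -Real.log r) (𝓝[>] (0:ℝ)) atTop :=
      tendsto_neg_atBot_atTop.comp Real.tendsto_log_nhdsGT_zero
    have h2 := h1.inv_tendsto_atTop
    have h3 : Tendsto (fun r : ℝ => -(-Real.log r)⁻¹) (𝓝[>] (0:ℝ)) (𝓝 (-0)) := h2.neg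
    simp only [inv_neg, neg_neg, neg_zero] at h3
    exact h3
  have hmapsto : Tendsto (fun r : ℝ => c' * r) (𝓝[>] (0:ℝ)) (𝓝[>] (0:ℝ)) := by
    refine tendsto_nhdsWithin_of_tendsto_nhds_of_eventually_within _ ?_ ?_
    · simpa using ((continuous_mul_left c').tendsto (0:ℝ)).mono_left
        nhdsWithin_le_nhds
    · exact eventually_mem_nhdsWithin.mono fun r hr => mul_pos hc' hr
  have hdim' : Tendsto (fun r => Real.log (P (c' * r)) / ((q - 1) * Real.log (c' * r)))
      (𝓝[>] (0:ℝ)) (𝓝 Dq) := hdim.comp hmapsto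
  have herr : Tendsto
      (fun r => (Real.log (Q (c' * r)) - Real.log (P (c' * r))) / Real.log r)
      (𝓝[>] (0:ℝ)) (𝓝 0) := by
    refine squeeze_zero_norm' (a := fun r => C * |(Real.log r)⁻¹|) ?_ ?_
    · filter_upwards [eventually_mem_nhdsWithin] with r hr
      have hr0 : (0:ℝ) < r := hr
      rw [Real.norm_eq_abs, div_eq_mul_inv, abs_mul]
      exact mul_le_mul_of_nonneg_right (hC _ (mul_pos hc' hr0)) (abs_nonneg _)
    · have := (hloginv.abs).const_mul C
      simpa using this
  -- the limit of the combined expression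
  have hG : Tendsto (fun r =>
      (q - 1) * (Real.log (2 * c') * (Real.log r)⁻¹ + 1) +
      (Real.log (P (c' * r)) / ((q - 1) * Real.log (c' * r))) *
        ((q - 1) * (Real.log c' * (Real.log r)⁻¹ + 1)) +
      (Real.log (Q (c' * r)) - Real.log (P (c' * r))) / Real.log r)
      (𝓝[>] (0:ℝ)) (𝓝 ((q - 1) * Dq + (q - 1))) := by
    have T1 : Tendsto (fun r : ℝ => (q - 1) * (Real.log (2 * c') * (Real.log r)⁻¹ + 1))
        (𝓝[>] (0:ℝ)) (𝓝 ((q - 1) * (Real.log (2 * c') * 0 + 1))) :=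
      ((hloginv.const_mul (Real.log (2 * c'))).add tendsto_const_nhds).const_mul _
    have T2 : Tendsto (fun r : ℝ => (Real.log (P (c' * r)) / ((q - 1) * Real.log (c' * r))) *
        ((q - 1) * (Real.log c' * (Real.log r)⁻¹ + 1)))
        (𝓝[>] (0:ℝ)) (𝓝 (Dq * ((q - 1) * (Real.log c' * 0 + 1)))) :=
      hdim'.mul (((hloginv.const_mul (Real.log c')).add tendsto_const_nhds).const_mul _)
    have := (T1.add T2).add herr
    have hval : (q - 1) * (Real.log (2 * c') * 0 + 1) + Dq * ((q - 1) * (Real.log c' * 0 + 1)) + 0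
        = (q - 1) * Dq + (q - 1) := by ring
    rwa [hval] at this
  refine hG.congr' ?_
  have hmem : Ioo (0:ℝ) (min 1 c'⁻¹) ∈ 𝓝[>] (0:ℝ) :=
    Ioo_mem_nhdsGT_of_mem ⟨le_refl 0, lt_min one_pos (inv_pos.2 hc')⟩
  filter_upwards [hmem] with r hr
  obtain ⟨hr0, hrlt⟩ := hr
  have hr1 : r < 1 := lt_of_lt_of_le hrlt (min_le_left _ _)
  have hrc : c' * r < 1 := by
    have : r < c'⁻¹ := lt_of_lt_of_le hrlt (min_le_right _ _)
    calc c' * r < c' * c'⁻¹ := by exact mul_lt_mul_of_pos_left this hc'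
      _ = 1 := mul_inv_cancel₀ hc'.ne'
  have hcr0 : 0 < c' * r := mul_pos hc' hr0
  have hlogr_ne : Real.log r ≠ 0 := (Real.log_neg hr0 hr1).ne
  have hlogcr_ne : Real.log (c' * r) ≠ 0 := (Real.log_neg hcr0 hrc).ne
  have hsum_ne : Real.log c' + Real.log r ≠ 0 := by
    rw [← Real.log_mul hc'.ne' hr0.ne']
    exact hlogcr_ne
  have hL : Real.log ((2 * c' * r) ^ (q - 1) * Q (c' * r))
      = (q - 1) * (Real.log (2 * c') + Real.log r) + Real.log (Q (c' * r)) := by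
    rw [Real.log_mul (Real.rpow_pos_of_pos (by positivity) _).ne' (hQ _ hcr0).ne',
      Real.log_rpow (by positivity), Real.log_mul (by positivity) hr0.ne']
  rw [Real.log_mul hc'.ne' hr0.ne', hL]
  field_simp
  ring

end AuxLemmas

set_option maxHeartbeats 1000000 in
/-- With `ν_R(A) = (∫_A 𝔱 dμ_R)/(∫ 𝔱 dμ_R)`, `κ ≤ 𝔱 ≤ 1/κ`, `q ≠ 1` and
`D_q(ν_R)` existing, for every `c > 1`,
`lim_{r→0⁺} log((2cr)^{q-1} ∫ 𝔱(ξ)/(∫𝔱dμ_R)^q · μ_R(B_{cr}(ξ))^{q-1} dμ_R(ξ)) / log r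
  = (q-1) D_q(ν_R) + (q-1)`, and the same holds with `c` replaced by `c⁻¹`. -/
theorem genDim_scaled_integral_limit (n : ℕ)
    (μR : Measure (EuclideanSpace ℝ (Fin n))) [IsProbabilityMeasure μR]
    (S : Set (EuclideanSpace ℝ (Fin n))) (hScompact : IsCompact S) (hSfull : μR Sᶜ = 0)
    (t : EuclideanSpace ℝ (Fin n) → ℝ) (htmeas : Measurable t)
    (κ : ℝ) (hκ0 : 0 < κ) (hκ1 : κ < 1)
    (htlb : ∀ ξ, κ ≤ t ξ) (htub : ∀ ξ, t ξ ≤ 1 / κ)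
    (νR : Measure (EuclideanSpace ℝ (Fin n)))
    (hνR : νR = (∫⁻ ξ, ENNReal.ofReal (t ξ) ∂μR)⁻¹ •
      μR.withDensity (fun ξ => ENNReal.ofReal (t ξ)))
    (q : ℝ) (hq : q ≠ 1) (Dq : ℝ)
    (hDq : HasGenDim νR (fun x r => Metric.closedBall x r) q Dq) :
    ∀ c : ℝ, 1 < c →
      (Tendsto (fun r : ℝ =>
          Real.log ((2 * c * r) ^ (q - 1) *
            ∫ ξ, (t ξ / (∫ η, t η ∂μR) ^ q) *
              (μR (Metric.closedBall ξ (c * r))).toReal ^ (q - 1) ∂μR) / Real.log r)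
        (𝓝[>] (0:ℝ)) (𝓝 ((q - 1) * Dq + (q - 1)))) ∧
      (Tendsto (fun r : ℝ =>
          Real.log ((2 * c⁻¹ * r) ^ (q - 1) *
            ∫ ξ, (t ξ / (∫ η, t η ∂μR) ^ q) *
              (μR (Metric.closedBall ξ (c⁻¹ * r))).toReal ^ (q - 1) ∂μR) / Real.log r)
        (𝓝[>] (0:ℝ)) (𝓝 ((q - 1) * Dq + (q - 1)))) := by
    classical
  -- basic facts about t and its integrals
  have htpos : ∀ ξ, 0 < t ξ := fun ξ => lt_of_lt_of_le hκ0 (htlb ξ)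
  have ht_int : Integrable t μR :=
    (integrable_const (1 / κ)).mono' htmeas.aestronglyMeasurable
      (ae_of_all _ fun ξ => by
        rw [Real.norm_eq_abs, abs_of_pos (htpos ξ)]; exact htub ξ)
  set T : ℝ≥0∞ := ∫⁻ ξ, ENNReal.ofReal (t ξ) ∂μR with hTdef
  set τ : ℝ := ∫ η, t η ∂μR with hτdef
  have hτκ : κ ≤ τ := by
    have := integral_mono (integrable_const κ) ht_int htlb
    simpa [hτdef] using this
  have hτpos : 0 < τ := lt_of_lt_of_le hκ0 hτκ
  have hτub : τ ≤ κ⁻¹ := by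
    have := integral_mono ht_int (integrable_const (1 / κ)) htub
    simpa [hτdef, one_div] using this
  have hTτ : T = ENNReal.ofReal τ :=
    (ofReal_integral_eq_lintegral_ofReal ht_int (ae_of_all _ fun ξ => (htpos ξ).le)).symm
  have hT0 : T ≠ 0 := by
    rw [hTτ]
    simpa using (ENNReal.ofReal_pos.2 hτpos).ne'
  have hTtop : T ≠ ⊤ := by rw [hTτ]; exact ENNReal.ofReal_ne_top
  have hνprob : IsProbabilityMeasure νR := by
    constructor
    rw [hνR, Measure.smul_apply, withDensity_apply _ MeasurableSet.univ,
      setLIntegral_univ, smul_eq_mul]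
    exact ENNReal.inv_mul_cancel hT0 hTtop
  -- comparison of νR with μR on measurable sets
  have hν_ub : ∀ A : Set (EuclideanSpace ℝ (Fin n)), MeasurableSet A →
      νR A ≤ ENNReal.ofReal (κ⁻¹ * κ⁻¹) * μR A := by
    intro A hA
    rw [hνR, Measure.smul_apply, withDensity_apply _ hA, smul_eq_mul]
    have h1 : ∫⁻ x in A, ENNReal.ofReal (t x) ∂μR ≤ ENNReal.ofReal κ⁻¹ * μR A := by
      calc ∫⁻ x in A, ENNReal.ofReal (t x) ∂μR
          ≤ ∫⁻ _ in A, ENNReal.ofReal κ⁻¹ ∂μR :=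
            lintegral_mono fun x =>
              ENNReal.ofReal_le_ofReal (by simpa [one_div] using htub x)
        _ = ENNReal.ofReal κ⁻¹ * μR A := by rw [setLIntegral_const]
    have h2 : T⁻¹ ≤ ENNReal.ofReal κ⁻¹ := by
      rw [hTτ, ← ENNReal.ofReal_inv_of_pos hτpos]
      exact ENNReal.ofReal_le_ofReal (inv_anti₀ hκ0 hτκ)
    calc T⁻¹ * ∫⁻ x in A, ENNReal.ofReal (t x) ∂μR
        ≤ ENNReal.ofReal κ⁻¹ * (ENNReal.ofReal κ⁻¹ * μR A) := mul_le_mul' h2 h1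
      _ = ENNReal.ofReal (κ⁻¹ * κ⁻¹) * μR A := by
          rw [ENNReal.ofReal_mul (inv_pos.2 hκ0).le, mul_assoc]
  have hν_lb : ∀ A : Set (EuclideanSpace ℝ (Fin n)), MeasurableSet A →
      ENNReal.ofReal (κ * κ) * μR A ≤ νR A := by
    intro A hA
    rw [hνR, Measure.smul_apply, withDensity_apply _ hA, smul_eq_mul]
    have h1 : ENNReal.ofReal κ * μR A ≤ ∫⁻ x in A, ENNReal.ofReal (t x) ∂μR := by
      calc ENNReal.ofReal κ * μR A = ∫⁻ _ in A, ENNReal.ofReal κ ∂μR := by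
            rw [setLIntegral_const]
        _ ≤ ∫⁻ x in A, ENNReal.ofReal (t x) ∂μR :=
            lintegral_mono fun x => ENNReal.ofReal_le_ofReal (htlb x)
    have h2 : ENNReal.ofReal κ ≤ T⁻¹ := by
      rw [hTτ]
      have : ENNReal.ofReal τ ≤ ENNReal.ofReal κ⁻¹ := ENNReal.ofReal_le_ofReal hτub
      calc ENNReal.ofReal κ = (ENNReal.ofReal κ⁻¹)⁻¹ := by
            rw [← ENNReal.ofReal_inv_of_pos (inv_pos.2 hκ0), inv_inv]
        _ ≤ (ENNReal.ofReal τ)⁻¹ := ENNReal.inv_le_inv.2 this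
    calc ENNReal.ofReal (κ * κ) * μR A = ENNReal.ofReal κ * (ENNReal.ofReal κ * μR A) := by
          rw [ENNReal.ofReal_mul hκ0.le, mul_assoc]
      _ ≤ T⁻¹ * ∫⁻ x in A, ENNReal.ofReal (t x) ∂μR := mul_le_mul' h2 h1
  -- measurability
  have hmB : ∀ s : ℝ, Measurable fun x : EuclideanSpace ℝ (Fin n) =>
      (μR (closedBall x s)).toReal :=
    fun s => (aux_measurable_closedBall μR s).ennreal_toReal
  have hνBmeas : ∀ s : ℝ, Measurable fun x : EuclideanSpace ℝ (Fin n) =>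
      (νR (closedBall x s)).toReal :=
    fun s => (aux_measurable_closedBall νR s).ennreal_toReal
  -- conversion of νR-integrals into μR-integrals
  have hconv : ∀ g : EuclideanSpace ℝ (Fin n) → ℝ,
      ∫ x, g x ∂νR = τ⁻¹ * ∫ x, t x * g x ∂μR := by
    intro g
    rw [hνR, integral_smul_measure]
    have hfun : (fun ξ => ENNReal.ofReal (t ξ)) =
        (fun ξ => (((fun ξ => (t ξ).toNNReal) ξ : ℝ≥0) : ℝ≥0∞)) := rfl
    rw [hfun, integral_withDensity_eq_integral_smul htmeas.real_toNNReal]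
    rw [smul_eq_mul, ENNReal.toReal_inv, hTτ, ENNReal.toReal_ofReal hτpos.le]
    congr 1
    apply integral_congr_ae
    apply ae_of_all
    intro x
    simp [NNReal.smul_def, Real.coe_toNNReal _ (htpos x).le]
  -- the two comparison constants
  set A₁ : ℝ := min ((κ * κ) ^ (q - 1)) ((κ⁻¹ * κ⁻¹) ^ (q - 1)) with hA₁def
  set B₁ : ℝ := max ((κ * κ) ^ (q - 1)) ((κ⁻¹ * κ⁻¹) ^ (q - 1)) with hB₁def
  have hκκ : (0:ℝ) < κ * κ := mul_pos hκ0 hκ0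
  have hκκ' : (0:ℝ) < κ⁻¹ * κ⁻¹ := mul_pos (inv_pos.2 hκ0) (inv_pos.2 hκ0)
  have hA₁pos : 0 < A₁ := lt_min (Real.rpow_pos_of_pos hκκ _) (Real.rpow_pos_of_pos hκκ' _)
  have hB₁pos : 0 < B₁ :=
    lt_of_lt_of_le hA₁pos (min_le_max)
  have hq0 : q - 1 ≠ 0 := sub_ne_zero.2 hq
  -- the pointwise rpow comparison
  have hpt : ∀ u v : ℝ, 0 ≤ u → κ * κ * u ≤ v → v ≤ κ⁻¹ * κ⁻¹ * u →
      A₁ * u ^ (q - 1) ≤ v ^ (q - 1) ∧ v ^ (q - 1) ≤ B₁ * u ^ (q - 1) := by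
    intro u v hu0 h1 h2
    rcases eq_or_lt_of_le hu0 with hu | hu
    · have hv : v = 0 := le_antisymm (by simpa [← hu] using h2)
        (le_trans (by simpa [← hu] using le_refl (0:ℝ)) h1)
      simp [← hu, hv, Real.zero_rpow hq0]
    · have hv : 0 < v := lt_of_lt_of_le (mul_pos hκκ hu) h1
      rcases le_or_gt 0 (q - 1) with hp | hp
      · constructor
        · calc A₁ * u ^ (q - 1) ≤ (κ * κ) ^ (q - 1) * u ^ (q - 1) :=
              mul_le_mul_of_nonneg_right (min_le_left _ _) (Real.rpow_nonneg hu0 _)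
            _ = (κ * κ * u) ^ (q - 1) := (Real.mul_rpow hκκ.le hu0).symm
            _ ≤ v ^ (q - 1) := Real.rpow_le_rpow (by positivity) h1 hp
        · calc v ^ (q - 1) ≤ (κ⁻¹ * κ⁻¹ * u) ^ (q - 1) := Real.rpow_le_rpow hv.le h2 hp
            _ = (κ⁻¹ * κ⁻¹) ^ (q - 1) * u ^ (q - 1) := Real.mul_rpow hκκ'.le hu0
            _ ≤ B₁ * u ^ (q - 1) :=
              mul_le_mul_of_nonneg_right (le_max_right _ _) (Real.rpow_nonneg hu0 _)
      · constructor
        · calc A₁ * u ^ (q - 1) ≤ (κ⁻¹ * κ⁻¹) ^ (q - 1) * u ^ (q - 1) :=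
              mul_le_mul_of_nonneg_right (min_le_right _ _) (Real.rpow_nonneg hu0 _)
            _ = (κ⁻¹ * κ⁻¹ * u) ^ (q - 1) := (Real.mul_rpow hκκ'.le hu0).symm
            _ ≤ v ^ (q - 1) :=
              Real.rpow_le_rpow_of_nonpos hv h2 hp.le
        · calc v ^ (q - 1) ≤ (κ * κ * u) ^ (q - 1) :=
              Real.rpow_le_rpow_of_nonpos (mul_pos hκκ hu) h1 hp.le
            _ = (κ * κ) ^ (q - 1) * u ^ (q - 1) := Real.mul_rpow hκκ.le hu0
            _ ≤ B₁ * u ^ (q - 1) :=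
              mul_le_mul_of_nonneg_right (le_max_left _ _) (Real.rpow_nonneg hu0 _)
  haveI := hνprob
  have hτq : (0:ℝ) < τ ^ q := Real.rpow_pos_of_pos hτpos q
  -- main per-scale estimate
  have main : ∀ s : ℝ, 0 < s →
      0 < (∫ x, (νR (closedBall x s)).toReal ^ (q - 1) ∂νR) ∧
      ((τ ^ q)⁻¹ * τ / B₁) * (∫ x, (νR (closedBall x s)).toReal ^ (q - 1) ∂νR) ≤
        (∫ ξ, (t ξ / τ ^ q) * (μR (closedBall ξ s)).toReal ^ (q - 1) ∂μR) ∧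
      (∫ ξ, (t ξ / τ ^ q) * (μR (closedBall ξ s)).toReal ^ (q - 1) ∂μR) ≤
        ((τ ^ q)⁻¹ * τ / A₁) * (∫ x, (νR (closedBall x s)).toReal ^ (q - 1) ∂νR) := by
    intro s hs
    obtain ⟨m, hm0, hmae⟩ := aux_ae_ball_lb μR hScompact hSfull hs
    set ε₁ : ℝ := min m 1 with hε₁def
    have hε₁0 : 0 < ε₁ := lt_min hm0 one_pos
    have hε₁1 : ε₁ ≤ 1 := min_le_right _ _
    set ε : ℝ := κ * κ * ε₁ with hεdef
    have hε0 : 0 < ε := mul_pos hκκ hε₁0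
    have hκκ1 : κ * κ ≤ 1 := by nlinarith
    have hε1 : ε ≤ 1 := by nlinarith
    -- a.e. bounds for the ball measures
    have hae : ∀ᵐ x ∂μR,
        ε ≤ (μR (closedBall x s)).toReal ∧ (μR (closedBall x s)).toReal ≤ 1 ∧
        ε ≤ (νR (closedBall x s)).toReal ∧ (νR (closedBall x s)).toReal ≤ 1 ∧
        κ * κ * (μR (closedBall x s)).toReal ≤ (νR (closedBall x s)).toReal ∧
        (νR (closedBall x s)).toReal ≤ κ⁻¹ * κ⁻¹ * (μR (closedBall x s)).toReal := by
      filter_upwards [hmae] with x hx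
      have hmu : m ≤ (μR (closedBall x s)).toReal := by
        have h := ENNReal.toReal_mono (measure_ne_top μR _) hx
        rwa [ENNReal.toReal_ofReal hm0.le] at h
      have hε₁u : ε₁ ≤ (μR (closedBall x s)).toReal := le_trans (min_le_left _ _) hmu
      have hu1 : ε ≤ (μR (closedBall x s)).toReal := by nlinarith
      have hu2 : (μR (closedBall x s)).toReal ≤ 1 := by
        have := ENNReal.toReal_mono (by simp : (1:ℝ≥0∞) ≠ ⊤)
          (prob_le_one (μ := μR) (s := closedBall x s))
        simpa using this
      have h5 : κ * κ * (μR (closedBall x s)).toReal ≤ (νR (closedBall x s)).toReal := by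
        have h := ENNReal.toReal_mono (measure_ne_top νR _)
          (hν_lb (closedBall x s) measurableSet_closedBall)
        rwa [ENNReal.toReal_mul, ENNReal.toReal_ofReal hκκ.le] at h
      have h6 : (νR (closedBall x s)).toReal ≤ κ⁻¹ * κ⁻¹ * (μR (closedBall x s)).toReal := by
        have h := ENNReal.toReal_mono
          (ENNReal.mul_ne_top ENNReal.ofReal_ne_top (measure_ne_top μR _))
          (hν_ub (closedBall x s) measurableSet_closedBall)
        rwa [ENNReal.toReal_mul, ENNReal.toReal_ofReal hκκ'.le] at h
      have h3 : ε ≤ (νR (closedBall x s)).toReal := by nlinarith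
      have h4 : (νR (closedBall x s)).toReal ≤ 1 := by
        have := ENNReal.toReal_mono (by simp : (1:ℝ≥0∞) ≠ ⊤)
          (prob_le_one (μ := νR) (s := closedBall x s))
        simpa using this
      exact ⟨hu1, hu2, h3, h4, h5, h6⟩
    -- integrability
    have hWmeas : AEStronglyMeasurable
        (fun x => t x * (μR (closedBall x s)).toReal ^ (q - 1)) μR :=
      (htmeas.mul ((hmB s).pow measurable_const)).aestronglyMeasurable
    have hVmeas : AEStronglyMeasurable
        (fun x => t x * (νR (closedBall x s)).toReal ^ (q - 1)) μR :=
      (htmeas.mul ((hνBmeas s).pow measurable_const)).aestronglyMeasurable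
    have hW_int : Integrable (fun x => t x * (μR (closedBall x s)).toReal ^ (q - 1)) μR := by
      refine (integrable_const (κ⁻¹ * max (ε ^ (q - 1)) 1)).mono' hWmeas ?_
      filter_upwards [hae] with x hx
      obtain ⟨h1, h2, -⟩ := hx
      have hb := (aux_rpow_bounds (p := q - 1) hε0 h1 h2).1
      rw [Real.norm_eq_abs, abs_of_nonneg (mul_nonneg (htpos x).le (Real.rpow_nonneg ENNReal.toReal_nonneg _))]
      exact mul_le_mul (by simpa [one_div] using htub x) hb (by positivity) (by positivity)
    have hV_int : Integrable (fun x => t x * (νR (closedBall x s)).toReal ^ (q - 1)) μR := by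
      refine (integrable_const (κ⁻¹ * max (ε ^ (q - 1)) 1)).mono' hVmeas ?_
      filter_upwards [hae] with x hx
      obtain ⟨-, -, h3, h4, -⟩ := hx
      have hb := (aux_rpow_bounds (p := q - 1) hε0 h3 h4).1
      rw [Real.norm_eq_abs, abs_of_nonneg (mul_nonneg (htpos x).le (Real.rpow_nonneg ENNReal.toReal_nonneg _))]
      exact mul_le_mul (by simpa [one_div] using htub x) hb (by positivity) (by positivity)
    set V : ℝ := ∫ x, t x * (νR (closedBall x s)).toReal ^ (q - 1) ∂μR with hVdef
    set W : ℝ := ∫ x, t x * (μR (closedBall x s)).toReal ^ (q - 1) ∂μR with hWdef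
    -- positivity of W and V
    have hδ : (0:ℝ) < κ * min (ε ^ (q - 1)) 1 :=
      mul_pos hκ0 (lt_min (Real.rpow_pos_of_pos hε0 _) one_pos)
    have hV_pos : 0 < V := by
      refine lt_of_lt_of_le ?_
        (integral_mono_ae (integrable_const (κ * min (ε ^ (q - 1)) 1)) hV_int ?_)
      · rw [integral_const, probReal_univ]
        simpa using hδ
      · filter_upwards [hae] with x hx
        obtain ⟨-, -, h3, h4, -⟩ := hx
        exact mul_le_mul (htlb x) (aux_rpow_bounds (p := q - 1) hε0 h3 h4).2
          (le_min (Real.rpow_pos_of_pos hε0 _).le zero_le_one) (htpos x).le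
    have hW_pos : 0 < W := by
      refine lt_of_lt_of_le ?_
        (integral_mono_ae (integrable_const (κ * min (ε ^ (q - 1)) 1)) hW_int ?_)
      · rw [integral_const, probReal_univ]
        simpa using hδ
      · filter_upwards [hae] with x hx
        obtain ⟨h1, h2, -⟩ := hx
        exact mul_le_mul (htlb x) (aux_rpow_bounds (p := q - 1) hε0 h1 h2).2
          (le_min (Real.rpow_pos_of_pos hε0 _).le zero_le_one) (htpos x).le
    -- comparison between V and W
    have hVW2 : V ≤ B₁ * W := by
      rw [hVdef, hWdef, ← integral_const_mul]
      refine integral_mono_ae hV_int (hW_int.const_mul B₁) ?_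
      filter_upwards [hae] with x hx
      obtain ⟨-, -, -, -, h5, h6⟩ := hx
      have hcmp := (hpt _ _ ENNReal.toReal_nonneg h5 h6).2
      calc t x * (νR (closedBall x s)).toReal ^ (q - 1)
          ≤ t x * (B₁ * (μR (closedBall x s)).toReal ^ (q - 1)) :=
            mul_le_mul_of_nonneg_left hcmp (htpos x).le
        _ = B₁ * (t x * (μR (closedBall x s)).toReal ^ (q - 1)) := by ring
    have hVW1 : A₁ * W ≤ V := by
      rw [hVdef, hWdef, ← integral_const_mul]
      refine integral_mono_ae (hW_int.const_mul A₁) hV_int ?_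
      filter_upwards [hae] with x hx
      obtain ⟨-, -, -, -, h5, h6⟩ := hx
      have hcmp := (hpt _ _ ENNReal.toReal_nonneg h5 h6).1
      calc A₁ * (t x * (μR (closedBall x s)).toReal ^ (q - 1))
          = t x * (A₁ * (μR (closedBall x s)).toReal ^ (q - 1)) := by ring
        _ ≤ t x * (νR (closedBall x s)).toReal ^ (q - 1) :=
            mul_le_mul_of_nonneg_left hcmp (htpos x).le
    -- conversion identities
    have hPV : (∫ x, (νR (closedBall x s)).toReal ^ (q - 1) ∂νR) = τ⁻¹ * V :=
      hconv _
    have hQW : (∫ ξ, (t ξ / τ ^ q) * (μR (closedBall ξ s)).toReal ^ (q - 1) ∂μR)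
        = (τ ^ q)⁻¹ * W := by
      rw [hWdef, ← integral_const_mul]
      congr 1
      funext ξ
      rw [div_eq_mul_inv]
      ring
    have hτ0' : τ ≠ 0 := hτpos.ne'
    have hτq0 : (τ:ℝ) ^ q ≠ 0 := hτq.ne'
    have hA₁0 : A₁ ≠ 0 := hA₁pos.ne'
    have hB₁0 : B₁ ≠ 0 := hB₁pos.ne'
    refine ⟨?_, ?_, ?_⟩
    · rw [hPV]
      exact mul_pos (inv_pos.2 hτpos) hV_pos
    · rw [hPV, hQW]
      calc (τ ^ q)⁻¹ * τ / B₁ * (τ⁻¹ * V) = (τ ^ q)⁻¹ * (V / B₁) := by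
            field_simp
        _ ≤ (τ ^ q)⁻¹ * W := by
            refine mul_le_mul_of_nonneg_left ?_ (by positivity)
            rw [div_le_iff₀ hB₁pos]
            linarith [hVW2]
    · rw [hPV, hQW]
      calc (τ ^ q)⁻¹ * W ≤ (τ ^ q)⁻¹ * (V / A₁) := by
            refine mul_le_mul_of_nonneg_left ?_ (by positivity)
            rw [le_div_iff₀ hA₁pos]
            linarith [hVW1]
        _ = (τ ^ q)⁻¹ * τ / A₁ * (τ⁻¹ * V) := by
            field_simp
  -- reformulate the dimension hypothesis
  have hdim : Tendsto (fun r => Real.log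
      (∫ x, (νR (closedBall x r)).toReal ^ (q - 1) ∂νR) / ((q - 1) * Real.log r))
      (𝓝[>] (0:ℝ)) (𝓝 Dq) := by
    have heq : dimRatio νR (fun x r => Metric.closedBall x r) q = fun r =>
        Real.log (∫ x, (νR (closedBall x r)).toReal ^ (q - 1) ∂νR)
          / ((q - 1) * Real.log r) := by
      funext r
      simp [dimRatio, hq]
    exact heq ▸ hDq
  intro c hc
  have hc0 : (0:ℝ) < c := lt_trans one_pos hc
  have ha₀ : (0:ℝ) < (τ ^ q)⁻¹ * τ / B₁ := by positivity
  have hb₀ : (0:ℝ) < (τ ^ q)⁻¹ * τ / A₁ := by positivity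
  refine ⟨aux_tendsto (P := fun s => ∫ x, (νR (closedBall x s)).toReal ^ (q - 1) ∂νR)
      (Q := fun s => ∫ ξ, (t ξ / τ ^ q) * (μR (closedBall ξ s)).toReal ^ (q - 1) ∂μR)
      hq hc0 ha₀ hb₀ (fun s hs => (main s hs).1)
      (fun s hs => (main s hs).2.1) (fun s hs => (main s hs).2.2) hdim,
    aux_tendsto (P := fun s => ∫ x, (νR (closedBall x s)).toReal ^ (q - 1) ∂νR)
      (Q := fun s => ∫ ξ, (t ξ / τ ^ q) * (μR (closedBall ξ s)).toReal ^ (q - 1) ∂μR)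
      hq (inv_pos.2 hc0) ha₀ hb₀ (fun s hs => (main s hs).1)
      (fun s hs => (main s hs).2.1) (fun s hs => (main s hs).2.2) hdim⟩
end

section
/- Let μ be a Borel probability measure on ℝ with compact support, let φ: ℝ → ℝ be Lipschitz, and let μ_Γ be the pushforward of μ under the map y ↦ (y, φ(y)) from ℝ to ℝ². Then for every q ∈ ℝ, D_q^+(μ_Γ) = D_q^+(μ) and D_q^−(μ_Γ) = D_q^−(μ); in particular D_q(μ_Γ) exists if and only if D_q(μ) exists, in which case they are equal. -/
open MeasureTheory Filter Topology Metric Set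
open scoped ENNReal NNReal

lemma map_mul_left_nhdsGT {c : ℝ} (hc : 0 < c) :
    Filter.map (fun s : ℝ => c * s) (𝓝[>] (0:ℝ)) = 𝓝[>] (0:ℝ) := by
  have key : ∀ d : ℝ, 0 < d → Filter.map (fun s : ℝ => d * s) (𝓝[>] (0:ℝ)) ≤ 𝓝[>] (0:ℝ) := by
    intro d hd
    rw [Filter.map_le_iff_le_comap, ← Filter.tendsto_iff_comap]
    apply tendsto_nhdsWithin_of_tendsto_nhds_of_eventually_within
    · have : Tendsto (fun s : ℝ => d * s) (𝓝 0) (𝓝 (d * 0)) :=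
        (continuous_const.mul continuous_id).tendsto 0
      simpa using this.mono_left nhdsWithin_le_nhds
    · filter_upwards [self_mem_nhdsWithin] with s hs
      exact mul_pos hd hs
  refine le_antisymm (key c hc) ?_
  have h2 := Filter.map_mono (m := fun s : ℝ => c * s) (key c⁻¹ (inv_pos.2 hc))
  rw [Filter.map_map] at h2
  have : ((fun s : ℝ => c * s) ∘ fun s : ℝ => c⁻¹ * s) = id := by
    funext s; simp [Function.comp, ← mul_assoc, mul_inv_cancel₀ hc.ne']
  rwa [this, Filter.map_id] at h2

lemma tendsto_mul_left_nhdsGT {c : ℝ} (hc : 0 < c) :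
    Tendsto (fun s : ℝ => c * s) (𝓝[>] (0:ℝ)) (𝓝[>] (0:ℝ)) :=
  (map_mul_left_nhdsGT hc).le

lemma tendsto_div_nhdsGT {c : ℝ} (hc : 0 < c) :
    Tendsto (fun s : ℝ => s / c) (𝓝[>] (0:ℝ)) (𝓝[>] (0:ℝ)) := by
  have := tendsto_mul_left_nhdsGT (inv_pos.2 hc)
  simpa [div_eq_inv_mul] using this

lemma map_div_nhdsGT {c : ℝ} (hc : 0 < c) :
    Filter.map (fun s : ℝ => s / c) (𝓝[>] (0:ℝ)) = 𝓝[>] (0:ℝ) := by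
  have := map_mul_left_nhdsGT (inv_pos.2 hc)
  simpa [div_eq_inv_mul] using this

/-- The key abstract sandwich lemma. -/
lemma sandwich_dims (c : ℝ) (hc : 0 < c) (R RΓ α : ℝ → ℝ)
    (h1 : ∀ᶠ r in 𝓝[>] (0:ℝ), R r ≤ RΓ r)
    (hR0 : ∀ᶠ r in 𝓝[>] (0:ℝ), 0 ≤ R r)
    (hRΓ0 : ∀ᶠ r in 𝓝[>] (0:ℝ), 0 ≤ RΓ r)
    (h2 : ∀ᶠ r in 𝓝[>] (0:ℝ), RΓ r ≤ R (r / c) * α r)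
    (hα : Tendsto α (𝓝[>] (0:ℝ)) (𝓝 1)) :
    limsup RΓ (𝓝[>] (0:ℝ)) = limsup R (𝓝[>] (0:ℝ)) ∧
    liminf RΓ (𝓝[>] (0:ℝ)) = liminf R (𝓝[>] (0:ℝ)) ∧
    ∀ D : ℝ, (Tendsto RΓ (𝓝[>] (0:ℝ)) (𝓝 D) ↔ Tendsto R (𝓝[>] (0:ℝ)) (𝓝 D)) := by
  set l : Filter ℝ := 𝓝[>] (0:ℝ) with hl
  have hmul : Tendsto (fun s : ℝ => c * s) l l := tendsto_mul_left_nhdsGT hc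
  have hdiv : Tendsto (fun s : ℝ => s / c) l l := tendsto_div_nhdsGT hc
  -- rescaled versions
  have h2' : ∀ᶠ s in l, RΓ (c * s) ≤ R s * α (c * s) := by
    filter_upwards [hmul.eventually h2] with s hs
    simpa [mul_div_cancel_left₀ _ hc.ne'] using hs
  have hβ : Tendsto (fun s : ℝ => α (c * s)) l (𝓝 1) := hα.comp hmul
  have hβpos : ∀ᶠ s in l, 0 < α (c * s) := hβ.eventually (eventually_gt_nhds one_pos)
  have hβ2 : ∀ᶠ s in l, α (c * s) ≤ 2 := hβ.eventually (eventually_le_nhds one_lt_two)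
  have hRdiv0 : ∀ᶠ r in l, 0 ≤ R (r / c) := hdiv.eventually hR0
  -- Tendsto part
  have htends : ∀ D : ℝ, (Tendsto RΓ l (𝓝 D) ↔ Tendsto R l (𝓝 D)) := by
    intro D
    constructor
    · intro hT
      have hlow : Tendsto (fun s => RΓ (c * s) / α (c * s)) l (𝓝 D) := by
        have := (hT.comp hmul).div hβ one_ne_zero
        rw [div_one] at this
        exact this
      refine tendsto_of_tendsto_of_tendsto_of_le_of_le' hlow hT ?_ h1
      filter_upwards [h2', hβpos] with s hs hp
      exact (div_le_iff₀ hp).2 hs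
    · intro hT
      have hup : Tendsto (fun r => R (r / c) * α r) l (𝓝 D) := by
        have := (hT.comp hdiv).mul hα
        simpa using this
      exact tendsto_of_tendsto_of_tendsto_of_le_of_le' hT hup h1 h2
  refine ⟨?_, ?_, htends⟩
  -- limsup part
  · by_cases hb : IsBoundedUnder (· ≤ ·) l RΓ
    · obtain ⟨M, hM⟩ := hb
      rw [Filter.eventually_map] at hM
      have hbR : IsBoundedUnder (· ≤ ·) l R := ⟨M, by
        rw [Filter.eventually_map]; filter_upwards [h1, hM] with r h h' using h.trans h'⟩
      have hcoR : IsCoboundedUnder (· ≤ ·) l R :=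
        IsCoboundedUnder.of_frequently_ge (hR0.frequently)
      have hcoRΓ : IsCoboundedUnder (· ≤ ·) l RΓ :=
        IsCoboundedUnder.of_frequently_ge (hRΓ0.frequently)
      have le1 : limsup R l ≤ limsup RΓ l := limsup_le_limsup h1 hcoR ⟨M, eventually_map.2 hM⟩
      have hL0 : 0 ≤ limsup R l := le_limsup_of_frequently_le (hR0.frequently) hbR
      have le2 : limsup RΓ l ≤ limsup R l := by
        set L := limsup R l
        refine le_of_forall_pos_le_add ?_
        intro ε' hε'
        set ε : ℝ := ε' / (L + 1) with hε
        have hεpos : 0 < ε := div_pos hε' (by linarith)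
        have hαε : ∀ᶠ r in l, α r ≤ 1 + ε := hα.eventually (eventually_le_nhds (by linarith))
        have hpos : (0:ℝ) < 1 + ε := by linarith
        -- bound for R ∘ (·/c)
        have hMR : ∀ᶠ r in l, R r ≤ M := by
          filter_upwards [h1, hM] with r h h' using h.trans h'
        have hMdiv : ∀ᶠ r in l, R (r / c) ≤ M := hdiv.eventually hMR
        have hgub : ∀ᶠ r in l, (1 + ε) * R (r / c) ≤ (1 + ε) * M := by
          filter_upwards [hMdiv] with r hr
          exact mul_le_mul_of_nonneg_left hr hpos.le
        have hglb : ∀ᶠ r in l, (0:ℝ) ≤ (1 + ε) * R (r / c) := by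
          filter_upwards [hRdiv0] with r hr
          exact mul_nonneg hpos.le hr
        have hstep : ∀ᶠ r in l, RΓ r ≤ (1 + ε) * R (r / c) := by
          filter_upwards [h2, hαε, hRdiv0] with r hr hα' h0
          calc RΓ r ≤ R (r / c) * α r := hr
            _ ≤ R (r / c) * (1 + ε) := mul_le_mul_of_nonneg_left hα' h0
            _ = (1 + ε) * R (r / c) := mul_comm _ _
        have hiso := OrderIso.limsup_apply (f := l) (u := fun r => R (r / c))
          (OrderIso.mulLeft₀ (1 + ε) hpos)
          ⟨M, eventually_map.2 hMdiv⟩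
          (IsCoboundedUnder.of_frequently_ge (hRdiv0.frequently))
          ⟨(1 + ε) * M, eventually_map.2 hgub⟩
          (IsCoboundedUnder.of_frequently_ge (hglb.frequently))
        have hcomp : limsup (fun r => R (r / c)) l = L := by
          have : limsup (fun r => R (r / c)) l = limsup R (Filter.map (fun r : ℝ => r / c) l) := by
            rw [Filter.limsup, Filter.limsup, Filter.map_map]; rfl
          rw [this, map_div_nhdsGT hc]
        have hb2 : limsup RΓ l ≤ limsup (fun r => (1 + ε) * R (r / c)) l :=
          limsup_le_limsup hstep hcoRΓ ⟨(1 + ε) * M, eventually_map.2 hgub⟩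
        have hmuls : (1 + ε) * limsup (fun r => R (r / c)) l
            = limsup (fun r => (1 + ε) * R (r / c)) l := hiso
        have : limsup RΓ l ≤ (1 + ε) * L := by
          rw [← hcomp, hmuls]
          exact hb2
        have hfin : (1 + ε) * L ≤ L + ε' := by
          have : ε * L ≤ ε' := by
            rw [hε, div_mul_eq_mul_div, div_le_iff₀ (by linarith : (0:ℝ) < L + 1)]
            nlinarith
          nlinarith
        linarith
      exact le_antisymm le2 le1
    · have hbR : ¬ IsBoundedUnder (· ≤ ·) l R := by
        intro ⟨M, hM⟩
        rw [Filter.eventually_map] at hM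
        refine hb ⟨2 * max M 0, ?_⟩
        rw [Filter.eventually_map, hl, ← map_mul_left_nhdsGT hc, Filter.eventually_map]
        rw [← hl]
        filter_upwards [h2', hβ2, hβpos, hR0, hM] with s hs h2s hps h0s hMs
        calc RΓ (c * s) ≤ R s * α (c * s) := hs
          _ ≤ max M 0 * 2 := mul_le_mul (le_max_of_le_left hMs) h2s hps.le (le_max_right _ _)
          _ = 2 * max M 0 := mul_comm _ _
      have empty : ∀ f : ℝ → ℝ, ¬ IsBoundedUnder (· ≤ ·) l f →
          limsup f l = 0 := by
        intro f hf
        rw [Filter.limsup_eq]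
        convert Real.sInf_empty using 2
        · rfl
        rw [eq_empty_iff_forall_notMem]
        intro a ha
        exact hf ⟨a, eventually_map.2 ha⟩
      rw [empty _ hb, empty _ hbR]
  -- liminf part
  · set A : (ℝ → ℝ) → Set ℝ := fun f => {a | ∀ᶠ r in l, a ≤ f r} with hA
    have hliminf : ∀ f : ℝ → ℝ, liminf f l = sSup (A f) := fun f => Filter.liminf_eq
    have h0R : (0:ℝ) ∈ A R := hR0
    have h0RΓ : (0:ℝ) ∈ A RΓ := hRΓ0
    have hsub : A R ⊆ A RΓ := by
      intro a ha
      filter_upwards [ha, h1] with r h h' using h.trans h'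
    have hhalf : ∀ ε : ℝ, 0 < ε → ∀ a ∈ A RΓ, a / (1 + ε) ∈ A R := by
      intro ε hε a ha
      have hαε : ∀ᶠ s in l, α (c * s) ≤ 1 + ε := hβ.eventually (eventually_le_nhds (by linarith))
      have ha' : ∀ᶠ s in l, a ≤ RΓ (c * s) := hmul.eventually ha
      filter_upwards [ha', h2', hαε, hR0] with s h hs hα' h0
      rw [div_le_iff₀ (by linarith : (0:ℝ) < 1 + ε)]
      calc a ≤ RΓ (c * s) := h
        _ ≤ R s * α (c * s) := hs
        _ ≤ R s * (1 + ε) := mul_le_mul_of_nonneg_left hα' h0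
    by_cases hcb : BddAbove (A RΓ)
    · have hcbR : BddAbove (A R) := hcb.mono hsub
      have le1 : liminf R l ≤ liminf RΓ l := by
        rw [hliminf, hliminf]
        exact csSup_le_csSup hcb ⟨0, h0R⟩ hsub
      have hL0 : 0 ≤ sSup (A R) := le_csSup hcbR h0R
      have le2 : liminf RΓ l ≤ liminf R l := by
        rw [hliminf, hliminf]
        refine le_of_forall_pos_le_add ?_
        intro ε' hε'
        set L := sSup (A R)
        set ε : ℝ := ε' / (L + 1) with hε
        have hεpos : 0 < ε := div_pos hε' (by linarith)
        have : sSup (A RΓ) ≤ (1 + ε) * L := by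
          refine csSup_le ⟨0, h0RΓ⟩ ?_
          intro a ha
          have := le_csSup hcbR (hhalf ε hεpos a ha)
          calc a = (1 + ε) * (a / (1 + ε)) := by field_simp
            _ ≤ (1 + ε) * L := mul_le_mul_of_nonneg_left this (by linarith)
        have hfin : (1 + ε) * L ≤ L + ε' := by
          have : ε * L ≤ ε' := by
            rw [hε, div_mul_eq_mul_div, div_le_iff₀ (by linarith : (0:ℝ) < L + 1)]
            nlinarith
          nlinarith
        linarith
      exact le_antisymm le2 le1
    · have hcbR : ¬ BddAbove (A R) := by
        intro ⟨M, hM⟩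
        refine hcb ⟨2 * M, ?_⟩
        intro a ha
        have := hM (hhalf 1 one_pos a ha)
        have h2 : a / 2 ≤ M := by norm_num at this ⊢; linarith [this]
        linarith
      rw [hliminf, hliminf, Real.sSup_of_not_bddAbove hcb, Real.sSup_of_not_bddAbove hcbR]

lemma exists_ae_ball_lower_bound (μ : Measure ℝ) [IsProbabilityMeasure μ] (S : Set ℝ)
    (hScompact : IsCompact S) (hSfull : μ Sᶜ = 0) {s : ℝ} (hs : 0 < s) :
    ∃ δ : ℝ, 0 < δ ∧ ∀ᵐ x ∂μ, ENNReal.ofReal δ ≤ μ (closedBall x s) := by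
  classical
  obtain ⟨t, ht⟩ := hScompact.elim_finite_subcover (fun c : ℝ => ball c (s/2))
    (fun c => isOpen_ball) (fun x hx => mem_iUnion.2 ⟨x, mem_ball_self (half_pos hs)⟩)
  set t' : Finset ℝ := t.filter (fun c => 0 < μ (ball c (s/2))) with ht'
  have hμS : μ S ≠ 0 := by
    intro h
    have : (1:ℝ≥0∞) ≤ 0 := by
      calc (1:ℝ≥0∞) = μ univ := (measure_univ).symm
        _ ≤ μ S + μ Sᶜ := by
            rw [← union_compl_self S] ; exact measure_union_le _ _
        _ = 0 := by rw [h, hSfull, add_zero]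
    simp at this
  have hne : t'.Nonempty := by
    by_contra h
    rw [Finset.not_nonempty_iff_eq_empty] at h
    apply hμS
    have hz : ∀ c ∈ t, μ (ball c (s/2)) = 0 := by
      intro c hc
      by_contra hcz
      have : c ∈ t' := Finset.mem_filter.2 ⟨hc, pos_iff_ne_zero.2 hcz⟩
      simp [h] at this
    refine le_antisymm ?_ zero_le
    calc μ S ≤ μ (⋃ c ∈ t, ball c (s/2)) := measure_mono ht
      _ ≤ ∑ c ∈ t, μ (ball c (s/2)) := measure_biUnion_finset_le t _
      _ = 0 := Finset.sum_eq_zero hz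
  refine ⟨t'.inf' hne (fun c => (μ (ball c (s/2))).toReal), ?_, ?_⟩
  · rw [Finset.lt_inf'_iff]
    intro c hc
    have := (Finset.mem_filter.1 hc).2
    exact ENNReal.toReal_pos this.ne' (measure_ne_top μ _)
  · have hbad : μ (Sᶜ ∪ ⋃ c ∈ (t \ t'), ball c (s/2)) = 0 := by
      refine measure_union_null hSfull ?_
      refine le_antisymm ?_ zero_le
      calc μ (⋃ c ∈ (t \ t'), ball c (s/2)) ≤ ∑ c ∈ (t \ t'), μ (ball c (s/2)) :=
            measure_biUnion_finset_le _ _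
        _ = 0 := by
            refine Finset.sum_eq_zero fun c hc => ?_
            rw [Finset.mem_sdiff] at hc
            by_contra hcz
            exact hc.2 (Finset.mem_filter.2 ⟨hc.1, pos_iff_ne_zero.2 hcz⟩)
    rw [ae_iff]
    refine measure_mono_null ?_ hbad
    intro x hx
    simp only [mem_setOf_eq, not_le] at hx
    by_contra hxmem
    rw [mem_union] at hxmem
    push_neg at hxmem
    obtain ⟨hxS, hxU⟩ := hxmem
    rw [notMem_compl_iff] at hxS
    obtain ⟨c, hct, hcx⟩ := mem_iUnion₂.1 (ht hxS)
    have hct' : c ∈ t' := by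
      by_contra h
      exact hxU (mem_iUnion₂.2 ⟨c, Finset.mem_sdiff.2 ⟨hct, h⟩, hcx⟩)
    have hsub : ball c (s/2) ⊆ closedBall x s := by
      intro y hy
      rw [mem_closedBall]
      calc dist y x ≤ dist y c + dist c x := dist_triangle _ _ _
        _ ≤ s/2 + s/2 := add_le_add (le_of_lt (mem_ball.1 hy))
            (le_of_lt (by rw [dist_comm]; exact mem_ball.1 hcx))
        _ = s := by ring
    have h1 : ENNReal.ofReal (t'.inf' hne (fun c => (μ (ball c (s/2))).toReal))
        ≤ μ (ball c (s/2)) := by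
      calc ENNReal.ofReal (t'.inf' hne (fun c => (μ (ball c (s/2))).toReal))
          ≤ ENNReal.ofReal ((μ (ball c (s/2))).toReal) :=
            ENNReal.ofReal_le_ofReal (Finset.inf'_le _ hct')
        _ = μ (ball c (s/2)) := ENNReal.ofReal_toReal (measure_ne_top μ _)
    exact absurd (h1.trans (measure_mono hsub)) (not_le.2 hx)

-- measurability of ball-measure maps
lemma meas_closedBall (μ : Measure ℝ) [SFinite μ] (s : ℝ) :
    Measurable (fun x : ℝ => μ (closedBall x s)) := by
  have hset : MeasurableSet {p : ℝ × ℝ | dist p.2 p.1 ≤ s} :=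
    (isClosed_le (continuous_dist.comp (continuous_snd.prodMk continuous_fst))
      continuous_const).measurableSet
  have h := measurable_measure_prodMk_left (ν := μ) hset
  exact h

lemma meas_prodBall (ν : Measure (ℝ × ℝ)) [SFinite ν] (r : ℝ) :
    Measurable (fun p : ℝ × ℝ => ν (prodBall p r)) := by
  have hcont : Continuous (fun z : (ℝ × ℝ) × (ℝ × ℝ) =>
      Real.sqrt (dist z.1.1 z.2.1 ^ 2 + dist z.1.2 z.2.2 ^ 2)) := by
    fun_prop
  have hset : MeasurableSet {z : (ℝ × ℝ) × (ℝ × ℝ) |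
      Real.sqrt (dist z.1.1 z.2.1 ^ 2 + dist z.1.2 z.2.2 ^ 2) ≤ r} :=
    (isClosed_le hcont continuous_const).measurableSet
  have h := measurable_measure_prodMk_left (ν := ν) hset
  exact h

lemma measurableSet_prodBall (x : ℝ × ℝ) (r : ℝ) : MeasurableSet (prodBall x r) := by
  have hcont : Continuous (fun y : ℝ × ℝ =>
      Real.sqrt (dist x.1 y.1 ^ 2 + dist x.2 y.2 ^ 2)) := by fun_prop
  exact (isClosed_le hcont continuous_const).measurableSet

-- geometry
lemma graph_ball_subsets (φ : ℝ → ℝ) (K : NNReal) (hφ : LipschitzWith K φ)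
    (x : ℝ) {r : ℝ} (hr : 0 ≤ r) :
    closedBall x (r / Real.sqrt (1 + (K:ℝ)^2)) ⊆
      (fun y : ℝ => (y, φ y)) ⁻¹' (prodBall (x, φ x) r) ∧
    (fun y : ℝ => (y, φ y)) ⁻¹' (prodBall (x, φ x) r) ⊆ closedBall x r := by
  set c := Real.sqrt (1 + (K:ℝ)^2) with hc
  have hc0 : 0 < c := Real.sqrt_pos.2 (by positivity)
  constructor
  · intro y hy
    rw [mem_closedBall] at hy
    show Real.sqrt (dist x y ^ 2 + dist (φ x) (φ y) ^ 2) ≤ r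
    have h1 : dist (φ x) (φ y) ≤ (K:ℝ) * dist x y := hφ.dist_le_mul x y
    have hd0 : (0:ℝ) ≤ dist x y := dist_nonneg
    have hd0' : (0:ℝ) ≤ dist (φ x) (φ y) := dist_nonneg
    have hK0 : (0:ℝ) ≤ (K:ℝ) := K.coe_nonneg
    have h2 : dist x y ^ 2 + dist (φ x) (φ y) ^ 2 ≤ (1 + (K:ℝ)^2) * dist x y ^ 2 := by
      nlinarith [mul_self_nonneg ((K:ℝ) * dist x y - dist (φ x) (φ y))]
    calc Real.sqrt (dist x y ^ 2 + dist (φ x) (φ y) ^ 2)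
        ≤ Real.sqrt ((1 + (K:ℝ)^2) * dist x y ^ 2) := Real.sqrt_le_sqrt h2
      _ = c * dist x y := by
          rw [Real.sqrt_mul (by positivity), Real.sqrt_sq dist_nonneg]
      _ = c * dist y x := by rw [dist_comm]
      _ ≤ c * (r / c) := mul_le_mul_of_nonneg_left hy hc0.le
      _ = r := by field_simp
  · intro y hy
    have hy' : Real.sqrt (dist x y ^ 2 + dist (φ x) (φ y) ^ 2) ≤ r := hy
    rw [mem_closedBall, dist_comm]
    calc dist x y = Real.sqrt (dist x y ^ 2) := (Real.sqrt_sq dist_nonneg).symm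
      _ ≤ Real.sqrt (dist x y ^ 2 + dist (φ x) (φ y) ^ 2) :=
          Real.sqrt_le_sqrt (le_add_of_nonneg_right (sq_nonneg _))
      _ ≤ r := hy'


lemma Measurable.rpow_const' {α : Type*} [MeasurableSpace α] {u : α → ℝ} (hu : Measurable u)
    (h0 : ∀ x, 0 ≤ u x) (e : ℝ) : Measurable fun x => u x ^ e := by
  have heq : (fun x => u x ^ e) = fun x =>
      if u x = 0 then (if e = 0 then 1 else 0) else Real.exp (Real.log (u x) * e) := by
    funext x
    rcases eq_or_lt_of_le (h0 x) with h | h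
    · rw [if_pos h.symm, ← h]
      by_cases he : e = 0
      · simp [he]
      · simp [Real.zero_rpow he, he]
    · rw [if_neg h.ne', Real.rpow_def_of_pos h]
  rw [heq]
  exact Measurable.ite (hu (measurableSet_singleton 0)) measurable_const
    (Real.measurable_exp.comp ((Real.measurable_log.comp hu).mul_const e))

lemma div_eq_div_mul_ratio {a lr lc e : ℝ} (hlr : lr ≠ 0) (hlc : lc ≠ 0) (he : e ≠ 0) :
    a / (e * lr) = a / (e * lc) * (lc / lr) := by
  field_simp

lemma central (μ : Measure ℝ) [IsProbabilityMeasure μ]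
    (S : Set ℝ) (hScompact : IsCompact S) (hSfull : μ Sᶜ = 0)
    (φ : ℝ → ℝ) (K : NNReal) (hφ : LipschitzWith K φ) (q : ℝ)
    {r : ℝ} (hr0 : 0 < r) (hr1 : r < 1) :
    0 ≤ dimRatio μ (fun x r => closedBall x r) q r ∧
    0 ≤ dimRatio (μ.map (fun y => (y, φ y))) prodBall q r ∧
    dimRatio μ (fun x r => closedBall x r) q r ≤
      dimRatio (μ.map (fun y => (y, φ y))) prodBall q r ∧
    dimRatio (μ.map (fun y => (y, φ y))) prodBall q r ≤
      dimRatio μ (fun x r => closedBall x r) q (r / Real.sqrt (1 + (K:ℝ)^2)) *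
        (Real.log (r / Real.sqrt (1 + (K:ℝ)^2)) / Real.log r) := by
  have hTm : Measurable (fun y : ℝ => (y, φ y)) :=
    measurable_id.prodMk hφ.continuous.measurable
  haveI : IsProbabilityMeasure (μ.map (fun y : ℝ => (y, φ y))) :=
    Measure.isProbabilityMeasure_map hTm.aemeasurable
  set c := Real.sqrt (1 + (K:ℝ)^2) with hc
  have hc0 : 0 < c := Real.sqrt_pos.2 (by positivity)
  have hc1 : 1 ≤ c := by
    have hsq := Real.sq_sqrt (show (0:ℝ) ≤ 1 + (K:ℝ)^2 by positivity)
    nlinarith [Real.sqrt_nonneg (1 + (K:ℝ)^2), sq_nonneg (K:ℝ)]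
  have hrc0 : 0 < r / c := div_pos hr0 hc0
  have hrc1 : r / c < 1 := lt_of_le_of_lt (div_le_self hr0.le hc1) hr1
  have hlogr : Real.log r < 0 := Real.log_neg hr0 hr1
  have hlogrc : Real.log (r/c) < 0 := Real.log_neg hrc0 hrc1
  have hsand : ∀ x : ℝ, μ (closedBall x (r/c)) ≤
      (μ.map (fun y : ℝ => (y, φ y))) (prodBall (x, φ x) r) ∧
      (μ.map (fun y : ℝ => (y, φ y))) (prodBall (x, φ x) r) ≤ μ (closedBall x r) := by
    intro x
    rw [Measure.map_apply hTm (measurableSet_prodBall _ _)]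
    obtain ⟨hlow, hup⟩ := graph_ball_subsets φ K hφ x hr0.le
    exact ⟨measure_mono hlow, measure_mono hup⟩
  obtain ⟨δ, hδ0, hae⟩ := exists_ae_ball_lower_bound μ S hScompact hSfull hrc0
  haveI : (ae μ).NeBot := ae_neBot.2 (IsProbabilityMeasure.ne_zero μ)
  have hδ1 : δ ≤ 1 := by
    obtain ⟨x, hx⟩ := hae.exists
    exact ENNReal.ofReal_le_one.1 (hx.trans prob_le_one)
  -- the three relevant functions and their properties
  have hu₁m : Measurable (fun x : ℝ => (μ (closedBall x (r/c))).toReal) :=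
    (meas_closedBall μ _).ennreal_toReal
  have hu₂m : Measurable (fun x : ℝ =>
      ((μ.map (fun y : ℝ => (y, φ y))) (prodBall (x, φ x) r)).toReal) := by
    have := ((meas_prodBall (μ.map (fun y : ℝ => (y, φ y))) r).comp hTm).ennreal_toReal
    exact this
  have hu₃m : Measurable (fun x : ℝ => (μ (closedBall x r)).toReal) :=
    (meas_closedBall μ _).ennreal_toReal
  have hchain : ∀ᵐ x ∂μ, δ ≤ (μ (closedBall x (r/c))).toReal ∧
      (μ (closedBall x (r/c))).toReal ≤
        ((μ.map (fun y : ℝ => (y, φ y))) (prodBall (x, φ x) r)).toReal ∧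
      ((μ.map (fun y : ℝ => (y, φ y))) (prodBall (x, φ x) r)).toReal ≤
        (μ (closedBall x r)).toReal ∧
      (μ (closedBall x r)).toReal ≤ 1 := by
    filter_upwards [hae] with x hx
    refine ⟨?_, ?_, ?_, ?_⟩
    · exact (ENNReal.ofReal_le_iff_le_toReal (measure_ne_top μ _)).1 hx
    · exact ENNReal.toReal_mono (measure_ne_top _ _) (hsand x).1
    · exact ENNReal.toReal_mono (measure_ne_top μ _) (hsand x).2
    · simpa using ENNReal.toReal_mono ENNReal.one_ne_top (prob_le_one)
  by_cases hq : q = 1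
  · -- q = 1 case
    simp only [dimRatio, if_pos hq]
    have htrans : (∫ p, Real.log ((μ.map (fun y : ℝ => (y, φ y))) (prodBall p r)).toReal
        ∂(μ.map (fun y : ℝ => (y, φ y))))
        = ∫ x, Real.log ((μ.map (fun y : ℝ => (y, φ y))) (prodBall (x, φ x) r)).toReal ∂μ := by
      rw [integral_map hTm.aemeasurable]
      exact (Real.measurable_log.comp
        (meas_prodBall (μ.map (fun y : ℝ => (y, φ y))) r).ennreal_toReal).aestronglyMeasurable
    rw [htrans]
    -- integrability and bounds
    have hkey : ∀ u : ℝ → ℝ, Measurable u → (∀ᵐ x ∂μ, δ ≤ u x ∧ u x ≤ 1) →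
        Integrable (fun x => Real.log (u x)) μ ∧ (∫ x, Real.log (u x) ∂μ) ≤ 0 := by
      intro u hum hub
      have hint : Integrable (fun x => Real.log (u x)) μ := by
        refine Integrable.mono' (integrable_const (-Real.log δ))
          (Real.measurable_log.comp hum).aestronglyMeasurable ?_
        filter_upwards [hub] with x hx
        have ht0 : 0 < u x := hδ0.trans_le hx.1
        rw [Real.norm_eq_abs, abs_of_nonpos (Real.log_nonpos ht0.le hx.2)]
        simp only [neg_le_neg_iff]
        exact Real.log_le_log hδ0 hx.1
      refine ⟨hint, integral_nonpos_of_ae ?_⟩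
      filter_upwards [hub] with x hx
      exact Real.log_nonpos (hδ0.trans_le hx.1).le hx.2
    have hub₁ : ∀ᵐ x ∂μ, δ ≤ (μ (closedBall x (r/c))).toReal ∧
        (μ (closedBall x (r/c))).toReal ≤ 1 := by
      filter_upwards [hchain] with x hx
      exact ⟨hx.1, hx.2.1.trans (hx.2.2.1.trans hx.2.2.2)⟩
    have hub₂ : ∀ᵐ x ∂μ,
        δ ≤ ((μ.map (fun y : ℝ => (y, φ y))) (prodBall (x, φ x) r)).toReal ∧
        ((μ.map (fun y : ℝ => (y, φ y))) (prodBall (x, φ x) r)).toReal ≤ 1 := by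
      filter_upwards [hchain] with x hx
      exact ⟨hx.1.trans hx.2.1, hx.2.2.1.trans hx.2.2.2⟩
    have hub₃ : ∀ᵐ x ∂μ, δ ≤ (μ (closedBall x r)).toReal ∧
        (μ (closedBall x r)).toReal ≤ 1 := by
      filter_upwards [hchain] with x hx
      exact ⟨hx.1.trans (hx.2.1.trans hx.2.2.1), hx.2.2.2⟩
    obtain ⟨hint₁, hneg₁⟩ := hkey _ hu₁m hub₁
    obtain ⟨hint₂, hneg₂⟩ := hkey _ hu₂m hub₂
    obtain ⟨hint₃, hneg₃⟩ := hkey _ hu₃m hub₃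
    have h12 : (∫ x, Real.log (μ (closedBall x (r/c))).toReal ∂μ) ≤
        ∫ x, Real.log ((μ.map (fun y : ℝ => (y, φ y))) (prodBall (x, φ x) r)).toReal ∂μ := by
      refine integral_mono_ae hint₁ hint₂ ?_
      filter_upwards [hchain] with x hx
      exact Real.log_le_log (hδ0.trans_le hx.1) hx.2.1
    have h23 : (∫ x, Real.log ((μ.map (fun y : ℝ => (y, φ y))) (prodBall (x, φ x) r)).toReal ∂μ)
        ≤ ∫ x, Real.log (μ (closedBall x r)).toReal ∂μ := by
      refine integral_mono_ae hint₂ hint₃ ?_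
      filter_upwards [hchain] with x hx
      exact Real.log_le_log (hδ0.trans_le (hx.1.trans hx.2.1)) hx.2.2.1
    refine ⟨?_, ?_, ?_, ?_⟩
    · exact div_nonneg_iff.2 (Or.inr ⟨hneg₃, hlogr.le⟩)
    · exact div_nonneg_iff.2 (Or.inr ⟨hneg₂, hlogr.le⟩)
    · exact div_le_div_of_nonpos_of_le hlogr.le h23
    · have h41 := div_le_div_of_nonpos_of_le hlogr.le h12
      have h42 : (∫ x, Real.log (μ (closedBall x (r/c))).toReal ∂μ) / Real.log r
          = (∫ x, Real.log (μ (closedBall x (r/c))).toReal ∂μ) / Real.log (r/c) *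
            (Real.log (r/c) / Real.log r) := by
        have := div_eq_div_mul_ratio (a := ∫ x, Real.log (μ (closedBall x (r/c))).toReal ∂μ)
          hlogr.ne hlogrc.ne one_ne_zero
        simpa using this
      linarith
  · -- q ≠ 1 case
    simp only [dimRatio, if_neg hq]
    set e := q - 1 with he'
    have he : e ≠ 0 := sub_ne_zero.2 hq
    have htrans : (∫ p, ((μ.map (fun y : ℝ => (y, φ y))) (prodBall p r)).toReal ^ e
        ∂(μ.map (fun y : ℝ => (y, φ y))))
        = ∫ x, ((μ.map (fun y : ℝ => (y, φ y))) (prodBall (x, φ x) r)).toReal ^ e ∂μ := by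
      rw [integral_map hTm.aemeasurable]
      exact (Measurable.rpow_const'
        (meas_prodBall (μ.map (fun y : ℝ => (y, φ y))) r).ennreal_toReal
        (fun _ => ENNReal.toReal_nonneg) e).aestronglyMeasurable
    rw [htrans]
    set m := min (δ ^ e) 1 with hm'
    set M := max (δ ^ e) 1 with hM'
    have hm0 : 0 < m := lt_min (Real.rpow_pos_of_pos hδ0 e) one_pos
    have hpow : ∀ t : ℝ, δ ≤ t → t ≤ 1 → m ≤ t ^ e ∧ t ^ e ≤ M := by
      intro t h1 h2
      have ht0 : 0 < t := hδ0.trans_le h1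
      rcases le_or_gt 0 e with he1 | he1
      · exact ⟨(min_le_left _ _).trans (Real.rpow_le_rpow hδ0.le h1 he1),
          (Real.rpow_le_one ht0.le h2 he1).trans (le_max_right _ _)⟩
      · exact ⟨(min_le_right _ _).trans
          (Real.one_le_rpow_of_pos_of_le_one_of_nonpos ht0 h2 he1.le),
          (Real.rpow_le_rpow_of_nonpos hδ0 h1 he1.le).trans (le_max_left _ _)⟩
    have hkey : ∀ u : ℝ → ℝ, Measurable u → (∀ x, 0 ≤ u x) →
        (∀ᵐ x ∂μ, δ ≤ u x ∧ u x ≤ 1) →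
        Integrable (fun x => u x ^ e) μ ∧ 0 < (∫ x, u x ^ e ∂μ) := by
      intro u hum hu0 hub
      have hint : Integrable (fun x => u x ^ e) μ := by
        refine Integrable.mono' (integrable_const M)
          (Measurable.rpow_const' hum hu0 e).aestronglyMeasurable ?_
        filter_upwards [hub] with x hx
        rw [Real.norm_eq_abs, abs_of_nonneg (Real.rpow_nonneg ((hδ0.trans_le hx.1).le) e)]
        exact (hpow _ hx.1 hx.2).2
      refine ⟨hint, ?_⟩
      have hmono : m ≤ ∫ x, u x ^ e ∂μ := by
        have := integral_mono_ae (integrable_const m) hint ?_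
        · simpa using this
        · filter_upwards [hub] with x hx
          exact (hpow _ hx.1 hx.2).1
      linarith
    have hub₁ : ∀ᵐ x ∂μ, δ ≤ (μ (closedBall x (r/c))).toReal ∧
        (μ (closedBall x (r/c))).toReal ≤ 1 := by
      filter_upwards [hchain] with x hx
      exact ⟨hx.1, hx.2.1.trans (hx.2.2.1.trans hx.2.2.2)⟩
    have hub₂ : ∀ᵐ x ∂μ,
        δ ≤ ((μ.map (fun y : ℝ => (y, φ y))) (prodBall (x, φ x) r)).toReal ∧
        ((μ.map (fun y : ℝ => (y, φ y))) (prodBall (x, φ x) r)).toReal ≤ 1 := by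
      filter_upwards [hchain] with x hx
      exact ⟨hx.1.trans hx.2.1, hx.2.2.1.trans hx.2.2.2⟩
    have hub₃ : ∀ᵐ x ∂μ, δ ≤ (μ (closedBall x r)).toReal ∧
        (μ (closedBall x r)).toReal ≤ 1 := by
      filter_upwards [hchain] with x hx
      exact ⟨hx.1.trans (hx.2.1.trans hx.2.2.1), hx.2.2.2⟩
    obtain ⟨hint₁, hpos₁⟩ := hkey _ hu₁m (fun _ => ENNReal.toReal_nonneg) hub₁
    obtain ⟨hint₂, hpos₂⟩ := hkey _ hu₂m (fun _ => ENNReal.toReal_nonneg) hub₂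
    obtain ⟨hint₃, hpos₃⟩ := hkey _ hu₃m (fun _ => ENNReal.toReal_nonneg) hub₃
    rcases lt_or_gt_of_ne he with he1 | he1
    · -- e < 0, i.e. q < 1 : integrand ≥ 1 and antitone in the measure
      have hd : 0 < e * Real.log r := mul_pos_of_neg_of_neg he1 hlogr
      have hge1 : ∀ u : ℝ → ℝ, (∀ᵐ x ∂μ, δ ≤ u x ∧ u x ≤ 1) →
          Integrable (fun x => u x ^ e) μ → (1:ℝ) ≤ ∫ x, u x ^ e ∂μ := by
        intro u hub hint
        have := integral_mono_ae (integrable_const (1:ℝ)) hint ?_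
        · simpa using this
        · filter_upwards [hub] with x hx
          exact Real.one_le_rpow_of_pos_of_le_one_of_nonpos (hδ0.trans_le hx.1) hx.2 he1.le
      have h32 : (∫ x, (μ (closedBall x r)).toReal ^ e ∂μ) ≤
          ∫ x, ((μ.map (fun y : ℝ => (y, φ y))) (prodBall (x, φ x) r)).toReal ^ e ∂μ := by
        refine integral_mono_ae hint₃ hint₂ ?_
        filter_upwards [hchain] with x hx
        exact Real.rpow_le_rpow_of_nonpos (hδ0.trans_le (hx.1.trans hx.2.1)) hx.2.2.1 he1.le
      have h21 : (∫ x, ((μ.map (fun y : ℝ => (y, φ y))) (prodBall (x, φ x) r)).toReal ^ e ∂μ)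
          ≤ ∫ x, (μ (closedBall x (r/c))).toReal ^ e ∂μ := by
        refine integral_mono_ae hint₂ hint₁ ?_
        filter_upwards [hchain] with x hx
        exact Real.rpow_le_rpow_of_nonpos (hδ0.trans_le hx.1) hx.2.1 he1.le
      have hlog₃ : 0 ≤ Real.log (∫ x, (μ (closedBall x r)).toReal ^ e ∂μ) :=
        Real.log_nonneg (hge1 _ hub₃ hint₃)
      have hlog₂ : 0 ≤ Real.log
          (∫ x, ((μ.map (fun y : ℝ => (y, φ y))) (prodBall (x, φ x) r)).toReal ^ e ∂μ) :=
        Real.log_nonneg (hge1 _ hub₂ hint₂)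
      have hlog32 : Real.log (∫ x, (μ (closedBall x r)).toReal ^ e ∂μ) ≤ Real.log
          (∫ x, ((μ.map (fun y : ℝ => (y, φ y))) (prodBall (x, φ x) r)).toReal ^ e ∂μ) :=
        Real.log_le_log hpos₃ h32
      have hlog21 : Real.log
          (∫ x, ((μ.map (fun y : ℝ => (y, φ y))) (prodBall (x, φ x) r)).toReal ^ e ∂μ) ≤
          Real.log (∫ x, (μ (closedBall x (r/c))).toReal ^ e ∂μ) :=
        Real.log_le_log hpos₂ h21
      refine ⟨div_nonneg hlog₃ hd.le, div_nonneg hlog₂ hd.le, ?_, ?_⟩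
      · exact (div_le_div_iff_of_pos_right hd).2 hlog32
      · have h41 := (div_le_div_iff_of_pos_right hd).2 hlog21
        have h42 := div_eq_div_mul_ratio
          (a := Real.log (∫ x, (μ (closedBall x (r/c))).toReal ^ e ∂μ)) hlogr.ne hlogrc.ne he
        linarith
    · -- e > 0, i.e. q > 1 : integrand ≤ 1 and monotone in the measure
      have hd : e * Real.log r < 0 := mul_neg_of_pos_of_neg he1 hlogr
      have hle1 : ∀ u : ℝ → ℝ, (∀ᵐ x ∂μ, δ ≤ u x ∧ u x ≤ 1) →
          Integrable (fun x => u x ^ e) μ → (∫ x, u x ^ e ∂μ) ≤ 1 := by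
        intro u hub hint
        have := integral_mono_ae hint (integrable_const (1:ℝ)) ?_
        · simpa using this
        · filter_upwards [hub] with x hx
          exact Real.rpow_le_one (hδ0.trans_le hx.1).le hx.2 he1.le
      have h12 : (∫ x, (μ (closedBall x (r/c))).toReal ^ e ∂μ) ≤
          ∫ x, ((μ.map (fun y : ℝ => (y, φ y))) (prodBall (x, φ x) r)).toReal ^ e ∂μ := by
        refine integral_mono_ae hint₁ hint₂ ?_
        filter_upwards [hchain] with x hx
        exact Real.rpow_le_rpow ENNReal.toReal_nonneg hx.2.1 he1.le
      have h23 : (∫ x, ((μ.map (fun y : ℝ => (y, φ y))) (prodBall (x, φ x) r)).toReal ^ e ∂μ)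
          ≤ ∫ x, (μ (closedBall x r)).toReal ^ e ∂μ := by
        refine integral_mono_ae hint₂ hint₃ ?_
        filter_upwards [hchain] with x hx
        exact Real.rpow_le_rpow ENNReal.toReal_nonneg hx.2.2.1 he1.le
      have hlog₃ : Real.log (∫ x, (μ (closedBall x r)).toReal ^ e ∂μ) ≤ 0 :=
        Real.log_nonpos hpos₃.le (hle1 _ hub₃ hint₃)
      have hlog₂ : Real.log
          (∫ x, ((μ.map (fun y : ℝ => (y, φ y))) (prodBall (x, φ x) r)).toReal ^ e ∂μ) ≤ 0 :=
        Real.log_nonpos hpos₂.le (hle1 _ hub₂ hint₂)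
      have hlog23 : Real.log
          (∫ x, ((μ.map (fun y : ℝ => (y, φ y))) (prodBall (x, φ x) r)).toReal ^ e ∂μ) ≤
          Real.log (∫ x, (μ (closedBall x r)).toReal ^ e ∂μ) :=
        Real.log_le_log hpos₂ h23
      have hlog12 : Real.log (∫ x, (μ (closedBall x (r/c))).toReal ^ e ∂μ) ≤ Real.log
          (∫ x, ((μ.map (fun y : ℝ => (y, φ y))) (prodBall (x, φ x) r)).toReal ^ e ∂μ) :=
        Real.log_le_log hpos₁ h12
      refine ⟨div_nonneg_iff.2 (Or.inr ⟨hlog₃, hd.le⟩),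
        div_nonneg_iff.2 (Or.inr ⟨hlog₂, hd.le⟩), ?_, ?_⟩
      · exact div_le_div_of_nonpos_of_le hd.le hlog23
      · have h41 := div_le_div_of_nonpos_of_le hd.le hlog12
        have h42 := div_eq_div_mul_ratio
          (a := Real.log (∫ x, (μ (closedBall x (r/c))).toReal ^ e ∂μ)) hlogr.ne hlogrc.ne he
        linarith


/-- If `μ` is a compactly supported Borel probability measure on `ℝ`,
`φ : ℝ → ℝ` is Lipschitz and `μ_Γ` is the pushforward of `μ` under `y ↦ (y, φ(y))`,
then for every `q ∈ ℝ`, `D_q^±(μ_Γ) = D_q^±(μ)`; in particular `D_q(μ_Γ)` exists iff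
`D_q(μ)` does, with equal values. -/
theorem genDim_graph_pushforward (μ : Measure ℝ) [IsProbabilityMeasure μ]
    (S : Set ℝ) (hScompact : IsCompact S) (hSfull : μ Sᶜ = 0)
    (φ : ℝ → ℝ) (K : NNReal) (hφ : LipschitzWith K φ)
    (μΓ : Measure (ℝ × ℝ)) (hμΓ : μΓ = μ.map (fun y => (y, φ y)))
    (q : ℝ) :
    genDimSup μΓ prodBall q = genDimSup μ (fun x r => Metric.closedBall x r) q ∧
    genDimInf μΓ prodBall q = genDimInf μ (fun x r => Metric.closedBall x r) q ∧
    ∀ D : ℝ, (HasGenDim μΓ prodBall q D ↔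
      HasGenDim μ (fun x r => Metric.closedBall x r) q D) := by
  subst hμΓ
  set c := Real.sqrt (1 + (K:ℝ)^2) with hc
  have hc0 : 0 < c := Real.sqrt_pos.2 (by positivity)
  have hcents : ∀ᶠ r in 𝓝[>] (0:ℝ), 0 < r ∧ r < 1 := by
    filter_upwards [Ioo_mem_nhdsGT_of_mem
      (show (0:ℝ) ∈ Ico (0:ℝ) 1 from ⟨le_refl 0, one_pos⟩)] with r hr
    exact ⟨hr.1, hr.2⟩
  have h1 : ∀ᶠ r in 𝓝[>] (0:ℝ), dimRatio μ (fun x r => Metric.closedBall x r) q r ≤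
      dimRatio (μ.map (fun y => (y, φ y))) prodBall q r := by
    filter_upwards [hcents] with r hr
    exact (central μ S hScompact hSfull φ K hφ q hr.1 hr.2).2.2.1
  have hR0 : ∀ᶠ r in 𝓝[>] (0:ℝ), 0 ≤ dimRatio μ (fun x r => Metric.closedBall x r) q r := by
    filter_upwards [hcents] with r hr
    exact (central μ S hScompact hSfull φ K hφ q hr.1 hr.2).1
  have hRΓ0 : ∀ᶠ r in 𝓝[>] (0:ℝ), 0 ≤ dimRatio (μ.map (fun y => (y, φ y))) prodBall q r := by
    filter_upwards [hcents] with r hr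
    exact (central μ S hScompact hSfull φ K hφ q hr.1 hr.2).2.1
  have h2 : ∀ᶠ r in 𝓝[>] (0:ℝ), dimRatio (μ.map (fun y => (y, φ y))) prodBall q r ≤
      dimRatio μ (fun x r => Metric.closedBall x r) q (r / c) *
        (Real.log (r / c) / Real.log r) := by
    filter_upwards [hcents] with r hr
    exact (central μ S hScompact hSfull φ K hφ q hr.1 hr.2).2.2.2
  have hα : Tendsto (fun r : ℝ => Real.log (r / c) / Real.log r) (𝓝[>] (0:ℝ)) (𝓝 1) := by
    have hinv : Tendsto (fun r : ℝ => (Real.log r)⁻¹) (𝓝[>] (0:ℝ)) (𝓝 0) := by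
      have hneg : Tendsto (fun r : ℝ => -Real.log r) (𝓝[>] (0:ℝ)) atTop :=
        tendsto_neg_atBot_atTop.comp Real.tendsto_log_nhdsGT_zero
      have h2' := hneg.inv_tendsto_atTop.neg
      simp only [Pi.inv_apply, Pi.neg_apply] at h2'
      simpa [inv_neg] using h2'
    have hnice : Tendsto (fun r : ℝ => 1 - Real.log c * (Real.log r)⁻¹) (𝓝[>] (0:ℝ))
        (𝓝 1) := by
      have hmul : Tendsto (fun r : ℝ => Real.log c * (Real.log r)⁻¹) (𝓝[>] (0:ℝ))
          (𝓝 (Real.log c * 0)) := hinv.const_mul (Real.log c)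
      rw [mul_zero] at hmul
      simpa using tendsto_const_nhds.sub hmul
    have heq : ∀ᶠ r in 𝓝[>] (0:ℝ), (fun r : ℝ => 1 - Real.log c * (Real.log r)⁻¹) r =
        (fun r : ℝ => Real.log (r / c) / Real.log r) r := by
      filter_upwards [hcents] with r hr
      have hlr : Real.log r ≠ 0 := (Real.log_neg hr.1 hr.2).ne
      show 1 - Real.log c * (Real.log r)⁻¹ = Real.log (r / c) / Real.log r
      rw [Real.log_div hr.1.ne' hc0.ne']
      field_simp
    exact Tendsto.congr' heq hnice
  obtain ⟨hsup, hinf, htend⟩ := sandwich_dims c hc0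
    (dimRatio μ (fun x r => Metric.closedBall x r) q)
    (dimRatio (μ.map (fun y => (y, φ y))) prodBall q)
    (fun r : ℝ => Real.log (r / c) / Real.log r) h1 hR0 hRΓ0 h2 hα
  exact ⟨hsup, hinf, htend⟩
end

section
/- For every α ∈ (0,1) there exist constants c₁, c₂ > 0 (depending only on α) such that for every a ∈ ℝ, every x ∈ ℝ and every r > 0, c₁·r·(|x − a| + r)^{−α} ≤ ∫_{x−r}^{x+r} |y − a|^{−α} dy ≤ c₂·r·(|x − a| + r)^{−α}. -/
open MeasureTheory Filter Topology Metric Set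

lemma absRpow_intervalIntegrable (α : ℝ) (hα : -1 < -α) (p q : ℝ) :
    IntervalIntegrable (fun y : ℝ => |y| ^ (-α)) volume p q := by
  have key : ∀ c : ℝ, 0 ≤ c → IntervalIntegrable (fun y : ℝ => |y| ^ (-α)) volume 0 c := by
    intro c hc
    have h := intervalIntegral.intervalIntegrable_rpow' (a := 0) (b := c) hα
    rw [intervalIntegrable_iff] at h ⊢
    refine h.congr_fun ?_ measurableSet_uIoc
    intro y hy
    rw [uIoc_of_le hc] at hy
    simp [abs_of_pos hy.1]
  have key2 : ∀ c : ℝ, IntervalIntegrable (fun y : ℝ => |y| ^ (-α)) volume 0 c := by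
    intro c
    rcases le_total 0 c with hc | hc
    · exact key c hc
    · rw [IntervalIntegrable.iff_comp_neg]
      simp only [abs_neg, neg_zero]
      exact key (-c) (by linarith)
  exact (key2 p).symm.trans (key2 q)

lemma absRpow_integral (α : ℝ) (hα0 : 0 < α) (hα1 : α < 1) (L : ℝ) (hL : 0 ≤ L) :
    ∫ y in (-L)..L, |y| ^ (-α) = 2 * L ^ (1 - α) / (1 - α) := by
  have h1 : ∫ y in (0:ℝ)..L, |y| ^ (-α) = L ^ (1 - α) / (1 - α) := by
    rw [intervalIntegral.integral_congr (g := fun y : ℝ => y ^ (-α)) ?_]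
    · rw [integral_rpow (Or.inl (by linarith))]
      rw [Real.zero_rpow (by intro h; nlinarith : -α + 1 ≠ 0)]
      rw [show -α + 1 = 1 - α by ring]
      ring
    · intro y hy
      rw [uIcc_of_le hL] at hy
      simp [abs_of_nonneg hy.1]
  have h2 : ∫ y in (-L)..(0:ℝ), |y| ^ (-α) = L ^ (1 - α) / (1 - α) := by
    have h := intervalIntegral.integral_comp_neg (a := (0:ℝ)) (b := L)
      (fun y : ℝ => |y| ^ (-α))
    simp only [abs_neg, neg_zero] at h
    rw [← h, h1]
  rw [← intervalIntegral.integral_add_adjacent_intervals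
    (absRpow_intervalIntegrable α (by linarith) (-L) 0)
    (absRpow_intervalIntegrable α (by linarith) 0 L), h1, h2]
  ring

/-- For every `α ∈ (0,1)` there are constants `c₁, c₂ > 0` (depending only
on `α`) such that for all `a, x ∈ ℝ` and `r > 0`,
`c₁ r (|x−a|+r)^{−α} ≤ ∫_{x−r}^{x+r} |y−a|^{−α} dy ≤ c₂ r (|x−a|+r)^{−α}`. -/
theorem power_singularity_ball_mass (α : ℝ) (hα : α ∈ Set.Ioo (0:ℝ) 1) :
    ∃ c₁ c₂ : ℝ, 0 < c₁ ∧ 0 < c₂ ∧ ∀ a x r : ℝ, 0 < r →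
      c₁ * r * (|x - a| + r) ^ (-α) ≤ (∫ y in Set.Icc (x - r) (x + r), |y - a| ^ (-α)) ∧
      (∫ y in Set.Icc (x - r) (x + r), |y - a| ^ (-α)) ≤ c₂ * r * (|x - a| + r) ^ (-α) := by
  obtain ⟨hα0, hα1⟩ := hα
  have h1α : (0:ℝ) < 1 - α := by linarith
  refine ⟨1, 6 / (1 - α), one_pos, by positivity, fun a x r hr => ?_⟩
  set L : ℝ := |x - a| + r with hLdef
  have habs : (0:ℝ) ≤ |x - a| := abs_nonneg _
  have hL : 0 < L := by positivity
  have hLa : (0:ℝ) < L ^ (-α) := Real.rpow_pos_of_pos hL _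
  set f : ℝ → ℝ := fun y => |y - a| ^ (-α) with hfdef
  have hfnn : ∀ y, 0 ≤ f y := fun y => Real.rpow_nonneg (abs_nonneg _) _
  have hint : ∀ p q : ℝ, IntervalIntegrable f volume p q := by
    intro p q
    have h := (absRpow_intervalIntegrable α (by linarith) (p - a) (q - a)).comp_sub_right a
    simpa using h
  have hii : IntegrableOn f (Icc (x - r) (x + r)) volume := by
    rw [← intervalIntegrable_iff_integrableOn_Icc_of_le (by linarith : x - r ≤ x + r)]
    exact hint _ _
  -- pointwise upper bound on |y - a| on the interval
  have htri : ∀ y ∈ Icc (x - r) (x + r), |y - a| ≤ L := by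
    intro y hy
    have h1 : |y - x| ≤ r := abs_le.2 ⟨by linarith [hy.1], by linarith [hy.2]⟩
    have h2 : |y - a| ≤ |y - x| + |x - a| := abs_sub_le y x a
    linarith
  constructor
  · -- lower bound
    have hne : ∀ᵐ y ∂(volume.restrict (Icc (x - r) (x + r))), y ≠ a := by
      refine ae_restrict_of_ae ?_
      rw [ae_iff]
      simpa using (by simp : (volume : Measure ℝ) {a} = 0)
    have hmono : ∫ y in Icc (x - r) (x + r), (L ^ (-α) : ℝ)
        ≤ ∫ y in Icc (x - r) (x + r), f y := by
      refine setIntegral_mono_ae_restrict (integrableOn_const (by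
        rw [Real.volume_Icc]; exact ENNReal.ofReal_ne_top)) hii ?_
      filter_upwards [ae_restrict_mem measurableSet_Icc, hne] with y hy hya
      have hp : 0 < |y - a| := abs_pos.2 (sub_ne_zero.2 hya)
      exact Real.rpow_le_rpow_of_nonpos hp (htri y hy) (by linarith)
    have hconst : ∫ y in Icc (x - r) (x + r), (L ^ (-α) : ℝ) = 2 * r * L ^ (-α) := by
      rw [setIntegral_const, measureReal_def, Real.volume_Icc, ENNReal.toReal_ofReal (by linarith),
        smul_eq_mul]
      ring
    rw [hconst] at hmono
    nlinarith
  · -- upper bound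
    rcases le_or_gt (|x - a|) (2 * r) with hcase | hcase
    · -- containment in Icc (a - L) (a + L)
      have hsub : Icc (x - r) (x + r) ⊆ Icc (a - L) (a + L) := by
        intro y hy
        have h1 := abs_le.1 (htri y hy)
        exact ⟨by linarith [h1.2], by linarith [h1.1]⟩
      have hbig : IntegrableOn f (Icc (a - L) (a + L)) volume := by
        rw [← intervalIntegrable_iff_integrableOn_Icc_of_le (by linarith : a - L ≤ a + L)]
        exact hint _ _
      have hmono : ∫ y in Icc (x - r) (x + r), f y ≤ ∫ y in Icc (a - L) (a + L), f y :=
        setIntegral_mono_set hbig (Eventually.of_forall fun y => hfnn y)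
          (HasSubset.Subset.eventuallyLE hsub)
      have hval : ∫ y in Icc (a - L) (a + L), f y = 2 * L ^ (1 - α) / (1 - α) := by
        rw [MeasureTheory.integral_Icc_eq_integral_Ioc,
          ← intervalIntegral.integral_of_le (by linarith : a - L ≤ a + L)]
        calc ∫ y in (a - L)..(a + L), f y
            = ∫ y in (a - L - a)..(a + L - a), |y| ^ (-α) :=
              intervalIntegral.integral_comp_sub_right (fun y : ℝ => |y| ^ (-α)) a
          _ = ∫ y in (-L)..L, |y| ^ (-α) := by
              rw [show a - L - a = -L by ring, show a + L - a = L by ring]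
          _ = 2 * L ^ (1 - α) / (1 - α) := absRpow_integral α hα0 hα1 L hL.le
      have hsplit : L ^ (1 - α) = L * L ^ (-α) := by
        rw [show (1:ℝ) - α = 1 + -α by ring, Real.rpow_add hL, Real.rpow_one]
      have hL3 : L ≤ 3 * r := by rw [hLdef]; linarith
      have hkey : 2 * L ^ (1 - α) ≤ 6 * r * L ^ (-α) := by
        rw [hsplit]
        nlinarith [mul_nonneg (by linarith : (0:ℝ) ≤ 3 * r - L) hLa.le]
      calc ∫ y in Icc (x - r) (x + r), f y ≤ 2 * L ^ (1 - α) / (1 - α) := by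
            rw [← hval]; exact hmono
        _ ≤ 6 * r * L ^ (-α) / (1 - α) := by gcongr
        _ = 6 / (1 - α) * r * L ^ (-α) := by ring
    · -- far from the singularity
      have hd : L / 3 ≤ |x - a| - r := by rw [hLdef]; linarith
      have hd3 : (0:ℝ) < L / 3 := by positivity
      have hpt : ∀ y ∈ Icc (x - r) (x + r), f y ≤ (L / 3) ^ (-α) := by
        intro y hy
        have h1 : |y - x| ≤ r := abs_le.2 ⟨by linarith [hy.1], by linarith [hy.2]⟩
        have h2 : |x - a| ≤ |x - y| + |y - a| := abs_sub_le x y a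
        have h3 : |x - y| = |y - x| := abs_sub_comm x y
        have h4 : L / 3 ≤ |y - a| := by linarith
        exact Real.rpow_le_rpow_of_nonpos hd3 h4 (by linarith)
      have hmono : ∫ y in Icc (x - r) (x + r), f y
          ≤ ∫ _y in Icc (x - r) (x + r), ((L / 3) ^ (-α) : ℝ) :=
        setIntegral_mono_on hii (integrableOn_const (by
          rw [Real.volume_Icc]; exact ENNReal.ofReal_ne_top)) measurableSet_Icc hpt
      have hconst : ∫ _y in Icc (x - r) (x + r), ((L / 3) ^ (-α) : ℝ)
          = 2 * r * (L / 3) ^ (-α) := by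
        rw [setIntegral_const, measureReal_def, Real.volume_Icc, ENNReal.toReal_ofReal (by linarith),
          smul_eq_mul]
        ring
      have hLd : (L / 3) ^ (-α) = L ^ (-α) * 3 ^ α := by
        rw [Real.div_rpow hL.le (by norm_num : (0:ℝ) ≤ 3), Real.rpow_neg (by norm_num : (0:ℝ) ≤ 3)]
        field_simp
      have h3a : (3:ℝ) ^ α ≤ 3 := by
        calc (3:ℝ) ^ α ≤ 3 ^ (1:ℝ) :=
              Real.rpow_le_rpow_of_exponent_le (by norm_num) (by linarith)
          _ = 3 := Real.rpow_one 3
      have h6 : (6:ℝ) ≤ 6 / (1 - α) := by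
        rw [le_div_iff₀ h1α]; nlinarith
      calc ∫ y in Icc (x - r) (x + r), f y ≤ 2 * r * (L / 3) ^ (-α) := by
            rw [← hconst]; exact hmono
        _ = 2 * r * (L ^ (-α) * 3 ^ α) := by rw [hLd]
        _ ≤ 2 * r * (L ^ (-α) * 3) := by gcongr
        _ = 6 * (r * L ^ (-α)) := by ring
        _ ≤ 6 / (1 - α) * (r * L ^ (-α)) :=
            mul_le_mul_of_nonneg_right h6 (by positivity)
        _ = 6 / (1 - α) * r * L ^ (-α) := by ring
end

section
/- Let μ be a Borel probability measure on ℝ^n and let Φ: ℝ^n → ℝ^n be a bijection such that both Φ and Φ^{−1} are Lipschitz. Then for every q ∈ ℝ, D_q^+(Φ_*μ) = D_q^+(μ) and D_q^−(Φ_*μ) = D_q^−(μ), where Φ_*μ denotes the pushforward of μ under Φ; in particular D_q(Φ_*μ) exists if and only if D_q(μ) exists, in which case they are equal. -/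
open MeasureTheory Filter Topology Metric Set

noncomputable section AuxGD

private lemma gd_tendsto_scale {c : ℝ} (hc : 0 < c) :
    Tendsto (fun r : ℝ => c * r) (𝓝[>] 0) (𝓝[>] 0) := by
  apply tendsto_nhdsWithin_of_tendsto_nhds_of_eventually_within
  · have h := (continuous_mul_left c).tendsto (0 : ℝ)
    simpa using h.mono_left nhdsWithin_le_nhds
  · filter_upwards [self_mem_nhdsWithin] with r hr
    exact mul_pos hc hr

private lemma gd_tendsto_w {c : ℝ} (hc : 0 < c) :
    Tendsto (fun r : ℝ => Real.log (c * r) / Real.log r) (𝓝[>] 0) (𝓝 1) := by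
  have hneg : Tendsto (fun r : ℝ => (-Real.log r)⁻¹) (𝓝[>] (0:ℝ)) (𝓝 0) :=
    (tendsto_neg_atBot_atTop.comp Real.tendsto_log_nhdsGT_zero).inv_tendsto_atTop
  have h0 : Tendsto (fun r : ℝ => Real.log c / Real.log r) (𝓝[>] (0:ℝ)) (𝓝 0) := by
    have h2 := hneg.const_mul (-Real.log c)
    rw [mul_zero] at h2
    apply h2.congr
    intro r
    rw [div_eq_mul_inv]
    rw [inv_neg]
    ring
  have h1 : Tendsto (fun r : ℝ => Real.log c / Real.log r + 1) (𝓝[>] (0:ℝ)) (𝓝 1) := by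
    simpa using h0.add tendsto_const_nhds
  apply h1.congr'
  filter_upwards [Ioo_mem_nhdsGT_of_mem (Set.left_mem_Ico.2 one_pos)] with r hr
  have hr0 : (0:ℝ) < r := hr.1
  have hlr : Real.log r ≠ 0 := ne_of_lt (Real.log_neg hr.1 hr.2)
  rw [Real.log_mul (ne_of_gt hc) (ne_of_gt hr0)]
  field_simp

private lemma gd_memSup {α : Type*} {l : Filter α} [l.NeBot] {F' G w : α → ℝ}
    (hb : ∀ᶠ r in l, G r ≤ F' r * w r) (hw : Tendsto w l (𝓝 1))
    (hF0 : ∀ᶠ r in l, 0 ≤ F' r) {x ε : ℝ} (hε : 0 < ε)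
    (hx : ∀ᶠ r in l, F' r ≤ x) : ∀ᶠ r in l, G r ≤ x + ε := by
  have hx0 : 0 ≤ x := by
    obtain ⟨r, h0, h1⟩ := (hF0.and hx).exists
    linarith
  have hw1 : ∀ᶠ r in l, w r < 1 + ε / (x + 1) :=
    hw.eventually_lt_const (lt_add_of_pos_right 1 (by positivity))
  have hw0 : ∀ᶠ r in l, 0 < w r := hw.eventually_const_lt one_pos
  filter_upwards [hb, hF0, hx, hw1, hw0] with r h1 h2 h3 h4 h5
  have e1 : F' r * w r ≤ x * w r := mul_le_mul_of_nonneg_right h3 h5.le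
  have e2 : x * w r ≤ x * (1 + ε / (x + 1)) := mul_le_mul_of_nonneg_left h4.le hx0
  have e3 : x * (ε / (x + 1)) ≤ ε := by
    have h1' : x / (x + 1) ≤ 1 := div_le_one_of_le₀ (by linarith) (by linarith)
    calc x * (ε / (x + 1)) = ε * (x / (x + 1)) := by ring
    _ ≤ ε * 1 := mul_le_mul_of_nonneg_left h1' hε.le
    _ = ε := mul_one ε
  nlinarith

private lemma gd_memInf {α : Type*} {l : Filter α} [l.NeBot] {F' G w : α → ℝ}
    (hb : ∀ᶠ r in l, F' r * w r ≤ G r) (hw : Tendsto w l (𝓝 1))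
    (hG0 : ∀ᶠ r in l, 0 ≤ G r) {x ε : ℝ} (hε : 0 < ε)
    (hx : ∀ᶠ r in l, x ≤ F' r) : ∀ᶠ r in l, x - ε ≤ G r := by
  rcases le_or_gt x 0 with h | h
  · filter_upwards [hG0] with r hr; linarith
  · have hw1 : ∀ᶠ r in l, (x - ε) / x < w r :=
      hw.eventually_const_lt (by rw [div_lt_one h]; linarith)
    have hw0 : ∀ᶠ r in l, 0 < w r := hw.eventually_const_lt one_pos
    filter_upwards [hb, hx, hw1, hw0] with r h1 h2 h3 h4
    have e1 : x - ε ≤ x * w r := by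
      have := mul_le_mul_of_nonneg_left h3.le h.le
      rwa [mul_div_assoc', mul_comm, mul_div_assoc, div_self h.ne', mul_one] at this
    have e2 : x * w r ≤ F' r * w r := mul_le_mul_of_nonneg_right h2 h4.le
    linarith

private lemma gd_sInf_le {S T : Set ℝ}
    (h12 : ∀ x ∈ T, ∀ ε : ℝ, 0 < ε → x + ε ∈ S)
    (h21 : ∀ x ∈ S, ∀ ε : ℝ, 0 < ε → x + ε ∈ T)
    (hS0 : ∀ x ∈ S, 0 ≤ x) : sInf S ≤ sInf T := by
  rcases T.eq_empty_or_nonempty with hT | hT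
  · have hS : S = ∅ := by
      rcases S.eq_empty_or_nonempty with h | ⟨x, hx⟩
      · exact h
      · exact absurd (h21 x hx 1 one_pos) (by simp [hT])
    simp [hS, hT]
  · apply le_csInf hT
    intro x hx
    have hbdd : BddBelow S := ⟨0, fun y hy => hS0 y hy⟩
    have key : ∀ ε > (0:ℝ), sInf S ≤ x + ε := fun ε hε => csInf_le hbdd (h12 x hx ε hε)
    by_contra hcon
    push_neg at hcon
    have := key ((sInf S - x)/2) (by linarith)
    linarith

private lemma gd_sSup_le {S T : Set ℝ}
    (h12 : ∀ x ∈ T, ∀ ε : ℝ, 0 < ε → x - ε ∈ S)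
    (h21 : ∀ x ∈ S, ∀ ε : ℝ, 0 < ε → x - ε ∈ T)
    (hT0 : (0:ℝ) ∈ T) : sSup T ≤ sSup S := by
  by_cases hbS : BddAbove S
  · have hbT : BddAbove T := by
      obtain ⟨M, hM⟩ := hbS
      refine ⟨M + 1, fun x hx => ?_⟩
      have := hM (h12 x hx 1 one_pos)
      linarith
    apply csSup_le ⟨0, hT0⟩
    intro x hx
    have key : ∀ ε > (0:ℝ), x - ε ≤ sSup S := fun ε hε => le_csSup hbS (h12 x hx ε hε)
    by_contra hcon
    push_neg at hcon
    have := key ((x - sSup S)/2) (by linarith)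
    linarith
  · have hbT : ¬ BddAbove T := by
      rintro ⟨M, hM⟩
      apply hbS
      refine ⟨M + 1, fun x hx => ?_⟩
      by_contra hc
      push_neg at hc
      have := hM (h21 x hx 1 one_pos)
      linarith
    rw [Real.sSup_of_not_bddAbove hbS, Real.sSup_of_not_bddAbove hbT]

end AuxGD

noncomputable section AuxGD2
open Real

private lemma gd_boundUpper {f g : ℝ → ℝ} {c : ℝ} (hc : 0 < c)
    (h : ∀ᶠ r in 𝓝[>](0:ℝ), f (c * r) ≤ g r) :
    ∀ᶠ r in 𝓝[>](0:ℝ),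
      g r / Real.log r ≤ (f (c * r) / Real.log (c * r)) * (Real.log (c * r) / Real.log r) := by
  filter_upwards [h, Ioo_mem_nhdsGT (lt_min one_pos (inv_pos.2 hc))] with r h1 h2
  have hr0 : (0:ℝ) < r := h2.1
  have hr1 : r < 1 := lt_of_lt_of_le h2.2 (min_le_left _ _)
  have hcr1 : c * r < 1 := by
    have hrc : r < c⁻¹ := lt_of_lt_of_le h2.2 (min_le_right _ _)
    calc c * r < c * c⁻¹ := mul_lt_mul_of_pos_left hrc hc
    _ = 1 := mul_inv_cancel₀ hc.ne'
  have hlcr : Real.log (c * r) < 0 := Real.log_neg (mul_pos hc hr0) hcr1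
  have hlr : Real.log r < 0 := Real.log_neg hr0 hr1
  calc g r / Real.log r ≤ f (c * r) / Real.log r := (div_le_div_right_of_neg hlr).2 h1
  _ = (f (c * r) / Real.log (c * r)) * (Real.log (c * r) / Real.log r) :=
      (div_mul_div_cancel₀ hlcr.ne).symm

private lemma gd_boundLower {f g : ℝ → ℝ} {c : ℝ} (hc : 0 < c)
    (h : ∀ᶠ r in 𝓝[>](0:ℝ), g r ≤ f (c * r)) :
    ∀ᶠ r in 𝓝[>](0:ℝ),
      (f (c * r) / Real.log (c * r)) * (Real.log (c * r) / Real.log r) ≤ g r / Real.log r := by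
  filter_upwards [h, Ioo_mem_nhdsGT (lt_min one_pos (inv_pos.2 hc))] with r h1 h2
  have hr0 : (0:ℝ) < r := h2.1
  have hr1 : r < 1 := lt_of_lt_of_le h2.2 (min_le_left _ _)
  have hcr1 : c * r < 1 := by
    have hrc : r < c⁻¹ := lt_of_lt_of_le h2.2 (min_le_right _ _)
    calc c * r < c * c⁻¹ := mul_lt_mul_of_pos_left hrc hc
    _ = 1 := mul_inv_cancel₀ hc.ne'
  have hlcr : Real.log (c * r) < 0 := Real.log_neg (mul_pos hc hr0) hcr1
  have hlr : Real.log r < 0 := Real.log_neg hr0 hr1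
  calc (f (c * r) / Real.log (c * r)) * (Real.log (c * r) / Real.log r)
      = f (c * r) / Real.log r := div_mul_div_cancel₀ hlcr.ne
  _ ≤ g r / Real.log r := (div_le_div_right_of_neg hlr).2 h1

private lemma gd_core {f g : ℝ → ℝ} {a b : ℝ} (ha : 1 ≤ a) (hb : 1 ≤ b)
    (h : ∀ᶠ r in 𝓝[>](0:ℝ), f (r / a) ≤ g r ∧ g r ≤ f (b * r))
    (hf : ∀ r, 0 < r → f r ≤ 0) (hg : ∀ r, 0 < r → g r ≤ 0) :
    limsup (fun r => g r / Real.log r) (𝓝[>](0:ℝ))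
        = limsup (fun r => f r / Real.log r) (𝓝[>](0:ℝ)) ∧
    liminf (fun r => g r / Real.log r) (𝓝[>](0:ℝ))
        = liminf (fun r => f r / Real.log r) (𝓝[>](0:ℝ)) ∧
    ∀ D : ℝ, (Tendsto (fun r => g r / Real.log r) (𝓝[>](0:ℝ)) (𝓝 D)
        ↔ Tendsto (fun r => f r / Real.log r) (𝓝[>](0:ℝ)) (𝓝 D)) := by
  have ha0 : (0:ℝ) < a := lt_of_lt_of_le one_pos ha
  have hb0 : (0:ℝ) < b := lt_of_lt_of_le one_pos hb
  set l := 𝓝[>](0:ℝ) with hl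
  set F := fun r => f r / Real.log r with hF
  set G := fun r => g r / Real.log r with hG
  have h1 : ∀ᶠ r in l, f (a⁻¹ * r) ≤ g r := by
    filter_upwards [h] with r hr
    rw [← div_eq_inv_mul]; exact hr.1
  have h2 : ∀ᶠ r in l, g r ≤ f (b * r) := h.mono fun r hr => hr.2
  have h2' : ∀ᶠ r in l, g (b⁻¹ * r) ≤ f r := by
    have h3 := (gd_tendsto_scale (inv_pos.2 hb0)).eventually h2
    filter_upwards [h3] with r hr
    rwa [mul_inv_cancel_left₀ hb0.ne'] at hr
  have h1' : ∀ᶠ r in l, f r ≤ g (a * r) := by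
    have h3 := (gd_tendsto_scale ha0).eventually h1
    filter_upwards [h3] with r hr
    rwa [inv_mul_cancel_left₀ ha0.ne'] at hr
  have hF0 : ∀ᶠ r in l, 0 ≤ F r := by
    filter_upwards [Ioo_mem_nhdsGT one_pos] with r hr
    rw [div_nonneg_iff]
    exact Or.inr ⟨hf r hr.1, (Real.log_neg hr.1 hr.2).le⟩
  have hG0 : ∀ᶠ r in l, 0 ≤ G r := by
    filter_upwards [Ioo_mem_nhdsGT one_pos] with r hr
    rw [div_nonneg_iff]
    exact Or.inr ⟨hg r hr.1, (Real.log_neg hr.1 hr.2).le⟩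
  have hGU := gd_boundUpper (inv_pos.2 ha0) h1
  have hGL := gd_boundLower hb0 h2
  have hFU := gd_boundUpper (inv_pos.2 hb0) h2'
  have hFL := gd_boundLower ha0 h1'
  -- membership transfer functions
  have HGF : ∀ x ε : ℝ, 0 < ε → (∀ᶠ r in l, F r ≤ x) → (∀ᶠ r in l, G r ≤ x + ε) := by
    intro x ε hε hx
    exact gd_memSup hGU (gd_tendsto_w (inv_pos.2 ha0))
      ((gd_tendsto_scale (inv_pos.2 ha0)).eventually hF0)
      hε ((gd_tendsto_scale (inv_pos.2 ha0)).eventually hx)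
  have HFG : ∀ x ε : ℝ, 0 < ε → (∀ᶠ r in l, G r ≤ x) → (∀ᶠ r in l, F r ≤ x + ε) := by
    intro x ε hε hx
    exact gd_memSup hFU (gd_tendsto_w (inv_pos.2 hb0))
      ((gd_tendsto_scale (inv_pos.2 hb0)).eventually hG0)
      hε ((gd_tendsto_scale (inv_pos.2 hb0)).eventually hx)
  have HGF' : ∀ x ε : ℝ, 0 < ε → (∀ᶠ r in l, x ≤ F r) → (∀ᶠ r in l, x - ε ≤ G r) := by
    intro x ε hε hx
    exact gd_memInf hGL (gd_tendsto_w hb0) hG0 hε ((gd_tendsto_scale hb0).eventually hx)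
  have HFG' : ∀ x ε : ℝ, 0 < ε → (∀ᶠ r in l, x ≤ G r) → (∀ᶠ r in l, x - ε ≤ F r) := by
    intro x ε hε hx
    exact gd_memInf hFL (gd_tendsto_w ha0) hF0 hε ((gd_tendsto_scale ha0).eventually hx)
  refine ⟨?_, ?_, ?_⟩
  · rw [limsup_eq, limsup_eq]
    apply le_antisymm
    · exact gd_sInf_le (fun x hx ε hε => HGF x ε hε hx) (fun x hx ε hε => HFG x ε hε hx)
        (fun x hx => by obtain ⟨r, h0, h1⟩ := (hG0.and hx).exists; linarith)
    · exact gd_sInf_le (fun x hx ε hε => HFG x ε hε hx) (fun x hx ε hε => HGF x ε hε hx)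
        (fun x hx => by obtain ⟨r, h0, h1⟩ := (hF0.and hx).exists; linarith)
  · rw [liminf_eq, liminf_eq]
    apply le_antisymm
    · exact gd_sSup_le (fun x hx ε hε => HFG' x ε hε hx) (fun x hx ε hε => HGF' x ε hε hx)
        hG0
    · exact gd_sSup_le (fun x hx ε hε => HGF' x ε hε hx) (fun x hx ε hε => HFG' x ε hε hx)
        hF0
  · intro D
    constructor
    · intro hGD
      have hup : Tendsto (fun r => (g (b⁻¹ * r) / Real.log (b⁻¹ * r))
          * (Real.log (b⁻¹ * r) / Real.log r)) l (𝓝 (D * 1)) :=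
        (hGD.comp (gd_tendsto_scale (inv_pos.2 hb0))).mul (gd_tendsto_w (inv_pos.2 hb0))
      have hlo : Tendsto (fun r => (g (a * r) / Real.log (a * r))
          * (Real.log (a * r) / Real.log r)) l (𝓝 (D * 1)) :=
        (hGD.comp (gd_tendsto_scale ha0)).mul (gd_tendsto_w ha0)
      rw [mul_one] at hup hlo
      exact tendsto_of_tendsto_of_tendsto_of_le_of_le' hlo hup hFL hFU
    · intro hFD
      have hup : Tendsto (fun r => (f (a⁻¹ * r) / Real.log (a⁻¹ * r))
          * (Real.log (a⁻¹ * r) / Real.log r)) l (𝓝 (D * 1)) :=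
        (hFD.comp (gd_tendsto_scale (inv_pos.2 ha0))).mul (gd_tendsto_w (inv_pos.2 ha0))
      have hlo : Tendsto (fun r => (f (b * r) / Real.log (b * r))
          * (Real.log (b * r) / Real.log r)) l (𝓝 (D * 1)) :=
        (hFD.comp (gd_tendsto_scale hb0)).mul (gd_tendsto_w hb0)
      rw [mul_one] at hup hlo
      exact tendsto_of_tendsto_of_tendsto_of_le_of_le' hlo hup hGL hGU
  
end AuxGD2

noncomputable section AuxGDM
set_option linter.unusedSectionVars false

variable {X : Type*} [MetricSpace X] [MeasurableSpace X] [BorelSpace X]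
  [SecondCountableTopology X]

def gdPhi (q t : ℝ) : ℝ := if q = 1 then Real.log t else t ^ (q - 1)

def gdI (μ : Measure X) (q r : ℝ) : ℝ := ∫ x, gdPhi q ((μ (closedBall x r)).toReal) ∂μ

def gdL (μ : Measure X) (q r : ℝ) : ℝ :=
  if q = 1 then gdI μ q r else Real.log (gdI μ q r) / (q - 1)

def gdGood (μ : Measure X) (q r : ℝ) : Prop :=
  Integrable (fun x => gdPhi q ((μ (closedBall x r)).toReal)) μ

lemma gd_meas_mb (μ : Measure X) [SFinite μ] (r : ℝ) :
    Measurable (fun x => μ (closedBall x r)) := by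
  have hs : MeasurableSet {p : X × X | dist p.2 p.1 ≤ r} :=
    (isClosed_le (continuous_dist.comp (continuous_snd.prodMk continuous_fst))
      continuous_const).measurableSet
  have h2 : ∀ x : X, closedBall x r = Prod.mk x ⁻¹' {p : X × X | dist p.2 p.1 ≤ r} := by
    intro x; rfl
  have h3 := measurable_measure_prodMk_left (ν := μ) hs
  simpa [← h2] using h3

lemma gd_meas_phi (ν : Measure X) [SFinite ν] (q r : ℝ) :
    Measurable (fun x => gdPhi q ((ν (closedBall x r)).toReal)) := by
  have hb := (gd_meas_mb ν r).ennreal_toReal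
  unfold gdPhi
  split_ifs with h
  · exact Real.measurable_log.comp hb
  · have h0 : ∀ x, 0 ≤ (ν (closedBall x r)).toReal := fun x => ENNReal.toReal_nonneg
    have heq : (fun x => ((ν (closedBall x r)).toReal) ^ (q - 1)) = fun x =>
        if (ν (closedBall x r)).toReal = 0 then (if q - 1 = 0 then 1 else 0)
        else Real.exp (Real.log ((ν (closedBall x r)).toReal) * (q - 1)) := by
      funext x
      rcases eq_or_lt_of_le (h0 x) with h' | h'
      · rw [← h', if_pos rfl]
        by_cases hq : q - 1 = 0
        · rw [if_pos hq, hq, Real.rpow_zero]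
        · rw [if_neg hq, Real.zero_rpow hq]
      · rw [if_neg h'.ne', Real.rpow_def_of_pos h']
    rw [heq]
    exact Measurable.ite (hb (measurableSet_singleton 0)) measurable_const
      (Real.measurable_exp.comp ((Real.measurable_log.comp hb).mul_const (q - 1)))

lemma gd_aePos (μ : Measure X) {r : ℝ} (hr : 0 < r) :
    ∀ᵐ x ∂μ, 0 < μ (closedBall x r) := by
  set A := {x : X | μ (closedBall x r) = 0} with hA
  obtain ⟨T, hTc, hTU⟩ := TopologicalSpace.isOpen_iUnion_countable
    (fun x : A => ball (x : X) r) (fun x => isOpen_ball)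
  have hU0 : μ (⋃ x : A, ball (x : X) r) = 0 := by
    rw [← hTU]
    refine (measure_biUnion_null_iff hTc).2 fun x _ => ?_
    exact measure_mono_null ball_subset_closedBall x.2
  have hAU : A ⊆ ⋃ x : A, ball (x : X) r :=
    fun x hx => mem_iUnion.2 ⟨⟨x, hx⟩, mem_ball_self hr⟩
  have hA0 : μ A = 0 := measure_mono_null hAU hU0
  rw [ae_iff]
  convert hA0 using 2
  ext x
  simp [hA, pos_iff_ne_zero]

lemma gd_pos_of_ae {μ : Measure X} [IsProbabilityMeasure μ] {s : Set X}
    (h : ∀ᵐ x ∂μ, x ∈ s) : 0 < μ s := by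
  classical
  by_contra h0
  push_neg at h0
  have hs0 : μ s = 0 := le_antisymm h0 zero_le
  have h1 : μ univ ≤ μ s + μ sᶜ := by
    rw [← Set.union_compl_self s]
    exact measure_union_le _ _
  have h2 : μ sᶜ = 0 := by
    rw [ae_iff] at h
    simpa [Set.compl_def] using h
  rw [hs0, h2, measure_univ] at h1
  simp at h1

lemma gd_toReal_le_one (μ : Measure X) [IsProbabilityMeasure μ] (s : Set X) :
    (μ s).toReal ≤ 1 := by
  have h1 : μ s ≤ 1 := prob_le_one
  have h := ENNReal.toReal_mono ENNReal.one_ne_top h1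
  simpa using h

lemma gd_good_gt (μ : Measure X) [IsProbabilityMeasure μ] {q : ℝ} (hq : 1 < q) (r : ℝ) :
    gdGood μ q r := by
  apply (integrable_const (1:ℝ)).mono (gd_meas_phi μ q r).aestronglyMeasurable
  refine ae_of_all _ fun x => ?_
  unfold gdPhi
  rw [if_neg hq.ne', Real.norm_eq_abs,
    abs_of_nonneg (Real.rpow_nonneg ENNReal.toReal_nonneg _), norm_one]
  exact Real.rpow_le_one ENNReal.toReal_nonneg (gd_toReal_le_one μ _)
    (by linarith : (0:ℝ) ≤ q - 1)

lemma gd_phi_anti {q : ℝ} (hq : q ≤ 1) {s t : ℝ} (hs : 0 < s) (hst : s ≤ t) (ht : t ≤ 1) :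
    ‖gdPhi q t‖ ≤ ‖gdPhi q s‖ := by
  have ht0 : 0 < t := lt_of_lt_of_le hs hst
  unfold gdPhi
  split_ifs with h
  · rw [Real.norm_eq_abs, Real.norm_eq_abs, abs_of_nonpos (Real.log_nonpos ht0.le ht),
      abs_of_nonpos (Real.log_nonpos hs.le (le_trans hst ht))]
    exact neg_le_neg ((Real.log_le_log_iff hs ht0).2 hst)
  · have hq1 : q - 1 ≤ 0 := by
      rcases lt_or_eq_of_le hq with h' | h'
      · linarith
      · exact absurd h' h
    rw [Real.norm_eq_abs, Real.norm_eq_abs,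
      abs_of_nonneg (Real.rpow_nonneg ht0.le _), abs_of_nonneg (Real.rpow_nonneg hs.le _)]
    exact Real.rpow_le_rpow_of_nonpos hs hst hq1

lemma gd_good_mono (μ : Measure X) [IsProbabilityMeasure μ] {q : ℝ} (hq : q ≤ 1)
    {r s : ℝ} (hr : 0 < r) (hrs : r ≤ s) (h : gdGood μ q r) : gdGood μ q s := by
  apply h.mono (gd_meas_phi μ q s).aestronglyMeasurable
  filter_upwards [gd_aePos μ hr] with x hx
  exact gd_phi_anti hq (ENNReal.toReal_pos hx.ne' (measure_ne_top μ _))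
    (ENNReal.toReal_mono (measure_ne_top μ _)
      (measure_mono (closedBall_subset_closedBall hrs)))
    (gd_toReal_le_one μ _)

lemma gd_L_of_bad {μ : Measure X} {q r : ℝ} (h : ¬ gdGood μ q r) : gdL μ q r = 0 := by
  have h0 : gdI μ q r = 0 := integral_undef h
  unfold gdL
  split_ifs with hq
  · exact h0
  · rw [h0, Real.log_zero, zero_div]

lemma gd_I_pos {μ : Measure X} [IsProbabilityMeasure μ] {q r : ℝ} (hq : q ≠ 1)
    (hr : 0 < r) (h : gdGood μ q r) : 0 < gdI μ q r := by
  have hnn : 0 ≤ᵐ[μ] fun x => gdPhi q ((μ (closedBall x r)).toReal) := by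
    refine ae_of_all _ fun x => ?_
    simp only [gdPhi, if_neg hq]
    exact Real.rpow_nonneg ENNReal.toReal_nonneg _
  unfold gdI
  refine (integral_pos_iff_support_of_nonneg_ae hnn h).2 ?_
  apply gd_pos_of_ae
  filter_upwards [gd_aePos μ hr] with x hx
  have hpos : 0 < gdPhi q ((μ (closedBall x r)).toReal) := by
    simp only [gdPhi, if_neg hq]
    exact Real.rpow_pos_of_pos (ENNReal.toReal_pos hx.ne' (measure_ne_top μ _)) _
  exact Function.mem_support.2 hpos.ne'

lemma gd_L_nonpos (μ : Measure X) [IsProbabilityMeasure μ] (q : ℝ) {r : ℝ} (hr : 0 < r) :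
    gdL μ q r ≤ 0 := by
  unfold gdL
  split_ifs with h
  · apply integral_nonpos
    intro x
    simp only [gdPhi, if_pos h]
    exact Real.log_nonpos ENNReal.toReal_nonneg (gd_toReal_le_one μ _)
  · by_cases hgood : gdGood μ q r
    · rcases lt_or_gt_of_ne h with hq | hq
      · -- q < 1 : gdI ≥ 1
        have h1 : (1:ℝ) ≤ gdI μ q r := by
          have hone : ∫ _x, (1:ℝ) ∂μ = 1 := by simp
          rw [← hone]
          unfold gdI
          apply integral_mono_ae (integrable_const 1) hgood
          filter_upwards [gd_aePos μ hr] with x hx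
          simp only [gdPhi, if_neg h]
          exact Real.one_le_rpow_of_pos_of_le_one_of_nonpos
            (ENNReal.toReal_pos hx.ne' (measure_ne_top μ _)) (gd_toReal_le_one μ _)
            (by linarith)
        rw [div_nonpos_iff]
        exact Or.inl ⟨Real.log_nonneg h1, by linarith⟩
      · -- q > 1 : gdI ≤ 1
        have h1 : gdI μ q r ≤ 1 := by
          have hone : ∫ _x, (1:ℝ) ∂μ = 1 := by simp
          rw [← hone]
          unfold gdI
          apply integral_mono_ae hgood (integrable_const 1)
          refine ae_of_all _ fun x => ?_
          simp only [gdPhi, if_neg h]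
          exact Real.rpow_le_one ENNReal.toReal_nonneg (gd_toReal_le_one μ _) (by linarith)
        have h0 : 0 ≤ gdI μ q r := by
          apply integral_nonneg
          intro x
          simp only [gdPhi, if_neg h]
          exact Real.rpow_nonneg ENNReal.toReal_nonneg _
        rw [div_nonpos_iff]
        exact Or.inr ⟨Real.log_nonpos h0 h1, by linarith⟩
    · have h0 : gdI μ q r = 0 := integral_undef hgood
      rw [h0, Real.log_zero, zero_div]

end AuxGDM


noncomputable section AuxGDMain
set_option linter.unusedSectionVars false

variable {X : Type*} [MetricSpace X] [MeasurableSpace X] [BorelSpace X]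
  [SecondCountableTopology X]

lemma gdMain (μ : Measure X) [IsProbabilityMeasure μ]
    {T : X → X} (hT : Measurable T) [IsProbabilityMeasure (μ.map T)]
    {a b : ℝ} (ha : 1 ≤ a) (hb : 1 ≤ b)
    (hlow : ∀ x r, 0 < r → μ (closedBall x (r / a)) ≤ (μ.map T) (closedBall (T x) r))
    (hup : ∀ x r, 0 < r → (μ.map T) (closedBall (T x) r) ≤ μ (closedBall x (b * r)))
    (q : ℝ) :
    (∀ᶠ r in 𝓝[>](0:ℝ),
        gdL μ q (r / a) ≤ gdL (μ.map T) q r ∧ gdL (μ.map T) q r ≤ gdL μ q (b * r)) ∨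
    (∀ᶠ r in 𝓝[>](0:ℝ), gdL μ q r = 0 ∧ gdL (μ.map T) q r = 0) := by
  have ha0 : (0:ℝ) < a := lt_of_lt_of_le one_pos ha
  have hb0 : (0:ℝ) < b := lt_of_lt_of_le one_pos hb
  have hmeasT : ∀ r : ℝ, Measurable fun x => gdPhi q (((μ.map T) (closedBall (T x) r)).toReal) :=
    fun r => (gd_meas_phi (μ.map T) q r).comp hT
  have hasm : ∀ r : ℝ, AEStronglyMeasurable
      (fun y => gdPhi q (((μ.map T) (closedBall y r)).toReal)) (μ.map T) :=
    fun r => (gd_meas_phi (μ.map T) q r).aestronglyMeasurable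
  have key : ∀ r : ℝ,
      gdI (μ.map T) q r = ∫ x, gdPhi q (((μ.map T) (closedBall (T x) r)).toReal) ∂μ := by
    intro r
    unfold gdI
    exact integral_map hT.aemeasurable (hasm r)
  have goodT : ∀ r : ℝ, gdGood (μ.map T) q r ↔
      Integrable (fun x => gdPhi q (((μ.map T) (closedBall (T x) r)).toReal)) μ := by
    intro r
    unfold gdGood
    exact integrable_map_measure (hasm r) hT.aemeasurable
  have hch : ∀ r : ℝ, 0 < r → ∀ᵐ x ∂μ,
      0 < (μ (closedBall x (r / a))).toReal ∧
      (μ (closedBall x (r / a))).toReal ≤ ((μ.map T) (closedBall (T x) r)).toReal ∧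
      ((μ.map T) (closedBall (T x) r)).toReal ≤ (μ (closedBall x (b * r))).toReal ∧
      (μ (closedBall x (b * r))).toReal ≤ 1 := by
    intro r hr
    filter_upwards [gd_aePos μ (div_pos hr ha0)] with x hx
    exact ⟨ENNReal.toReal_pos hx.ne' (measure_ne_top μ _),
      ENNReal.toReal_mono (measure_ne_top _ _) (hlow x r hr),
      ENNReal.toReal_mono (measure_ne_top μ _) (hup x r hr),
      gd_toReal_le_one μ _⟩
  by_cases hAll : ∀ r : ℝ, 0 < r → gdGood μ q r
  · left
    have goodν : ∀ r : ℝ, 0 < r → gdGood (μ.map T) q r := by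
      intro r hr
      rcases le_or_gt q 1 with hq | hq
      · refine (goodT r).2 ?_
        apply (hAll (r / a) (div_pos hr ha0)).mono (hmeasT r).aestronglyMeasurable
        filter_upwards [hch r hr] with x hx
        obtain ⟨h1, h2, h3, h4⟩ := hx
        exact gd_phi_anti hq h1 h2 (h3.trans h4)
      · exact gd_good_gt _ hq r
    filter_upwards [self_mem_nhdsWithin] with r hrmem
    have hr : (0:ℝ) < r := hrmem
    have hs₁ : (0:ℝ) < r / a := div_pos hr ha0
    have hs₂ : (0:ℝ) < b * r := mul_pos hb0 hr
    have hg1 : gdGood μ q (r / a) := hAll _ hs₁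
    have hg2 : gdGood μ q (b * r) := hAll _ hs₂
    have hgν : gdGood (μ.map T) q r := goodν r hr
    have hgνT : Integrable (fun x => gdPhi q (((μ.map T) (closedBall (T x) r)).toReal)) μ :=
      (goodT r).1 hgν
    rcases eq_or_ne q 1 with hq | hq
    · -- q = 1
      have ineq1 : gdI μ q (r / a) ≤ gdI (μ.map T) q r := by
        rw [key r]
        unfold gdI
        apply integral_mono_ae hg1 hgνT
        filter_upwards [hch r hr] with x hx
        obtain ⟨h1, h2, h3, h4⟩ := hx
        simp only [gdPhi, if_pos hq]
        exact (Real.log_le_log_iff h1 (lt_of_lt_of_le h1 h2)).2 h2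
      have ineq2 : gdI (μ.map T) q r ≤ gdI μ q (b * r) := by
        rw [key r]
        unfold gdI
        apply integral_mono_ae hgνT hg2
        filter_upwards [hch r hr] with x hx
        obtain ⟨h1, h2, h3, h4⟩ := hx
        simp only [gdPhi, if_pos hq]
        exact (Real.log_le_log_iff (lt_of_lt_of_le h1 h2)
          (lt_of_lt_of_le (lt_of_lt_of_le h1 h2) h3)).2 h3
      simp only [gdL, if_pos hq]
      exact ⟨ineq1, ineq2⟩
    · rcases lt_or_gt_of_ne hq with hql | hqg
      · -- q < 1
        have I1 : gdI (μ.map T) q r ≤ gdI μ q (r / a) := by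
          rw [key r]
          unfold gdI
          apply integral_mono_ae hgνT hg1
          filter_upwards [hch r hr] with x hx
          obtain ⟨h1, h2, h3, h4⟩ := hx
          simp only [gdPhi, if_neg hq]
          exact Real.rpow_le_rpow_of_nonpos h1 h2 (by linarith)
        have I2 : gdI μ q (b * r) ≤ gdI (μ.map T) q r := by
          rw [key r]
          unfold gdI
          apply integral_mono_ae hg2 hgνT
          filter_upwards [hch r hr] with x hx
          obtain ⟨h1, h2, h3, h4⟩ := hx
          simp only [gdPhi, if_neg hq]
          exact Real.rpow_le_rpow_of_nonpos (lt_of_lt_of_le h1 h2) h3 (by linarith)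
        have P1 : 0 < gdI (μ.map T) q r := gd_I_pos hq hr hgν
        have P2 : 0 < gdI μ q (b * r) := gd_I_pos hq hs₂ hg2
        have L1 : Real.log (gdI (μ.map T) q r) ≤ Real.log (gdI μ q (r / a)) :=
          (Real.log_le_log_iff P1 (lt_of_lt_of_le P1 I1)).2 I1
        have L2 : Real.log (gdI μ q (b * r)) ≤ Real.log (gdI (μ.map T) q r) :=
          (Real.log_le_log_iff P2 (lt_of_lt_of_le P2 I2)).2 I2
        simp only [gdL, if_neg hq]
        constructor
        · exact (div_le_div_right_of_neg (show q - 1 < 0 by linarith)).2 L1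
        · exact (div_le_div_right_of_neg (show q - 1 < 0 by linarith)).2 L2
      · -- q > 1
        have I1 : gdI μ q (r / a) ≤ gdI (μ.map T) q r := by
          rw [key r]
          unfold gdI
          apply integral_mono_ae hg1 hgνT
          filter_upwards [hch r hr] with x hx
          obtain ⟨h1, h2, h3, h4⟩ := hx
          simp only [gdPhi, if_neg hq]
          exact Real.rpow_le_rpow ENNReal.toReal_nonneg h2 (by linarith)
        have I2 : gdI (μ.map T) q r ≤ gdI μ q (b * r) := by
          rw [key r]
          unfold gdI
          apply integral_mono_ae hgνT hg2
          filter_upwards [hch r hr] with x hx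
          obtain ⟨h1, h2, h3, h4⟩ := hx
          simp only [gdPhi, if_neg hq]
          exact Real.rpow_le_rpow ENNReal.toReal_nonneg h3 (by linarith)
        have P1 : 0 < gdI μ q (r / a) := gd_I_pos hq hs₁ hg1
        have Pν : 0 < gdI (μ.map T) q r := lt_of_lt_of_le P1 I1
        have L1 : Real.log (gdI μ q (r / a)) ≤ Real.log (gdI (μ.map T) q r) :=
          (Real.log_le_log_iff P1 Pν).2 I1
        have L2 : Real.log (gdI (μ.map T) q r) ≤ Real.log (gdI μ q (b * r)) :=
          (Real.log_le_log_iff Pν (lt_of_lt_of_le Pν I2)).2 I2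
        simp only [gdL, if_neg hq]
        constructor
        · exact (div_le_div_iff_of_pos_right (show (0:ℝ) < q - 1 by linarith)).2 L1
        · exact (div_le_div_iff_of_pos_right (show (0:ℝ) < q - 1 by linarith)).2 L2
  · right
    push_neg at hAll
    obtain ⟨r₀, hr₀, hbad⟩ := hAll
    have hq1 : q ≤ 1 := by
      by_contra hq
      exact hbad (gd_good_gt μ (not_le.1 hq) r₀)
    have badμ : ∀ r : ℝ, 0 < r → r ≤ r₀ → ¬ gdGood μ q r :=
      fun r hr hle hg => hbad (gd_good_mono μ hq1 hr hle hg)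
    have badν : ∀ r : ℝ, 0 < r → b * r ≤ r₀ → ¬ gdGood (μ.map T) q r := by
      intro r hr hle hg
      apply badμ (b * r) (mul_pos hb0 hr) hle
      apply ((goodT r).1 hg).mono (gd_meas_phi μ q (b * r)).aestronglyMeasurable
      filter_upwards [hch r hr] with x hx
      obtain ⟨h1, h2, h3, h4⟩ := hx
      exact gd_phi_anti hq1 (lt_of_lt_of_le h1 h2) h3 h4
    filter_upwards [Ioo_mem_nhdsGT
      (lt_min hr₀ (div_pos hr₀ hb0) : (0:ℝ) < min r₀ (r₀ / b))] with r hrm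
    have hr : (0:ℝ) < r := hrm.1
    constructor
    · exact gd_L_of_bad (badμ r hr (le_of_lt (lt_of_lt_of_le hrm.2 (min_le_left _ _))))
    · apply gd_L_of_bad
      apply badν r hr
      have h2 : r < r₀ / b := lt_of_lt_of_le hrm.2 (min_le_right _ _)
      have h3 : r * b < r₀ := (lt_div_iff₀ hb0).1 h2
      rw [mul_comm]
      exact h3.le

lemma gd_dimRatio_eq (μ : Measure X) (q : ℝ) :
    dimRatio μ (fun x r => closedBall x r) q = fun r => gdL μ q r / Real.log r := by
  funext r
  by_cases h : q = 1
  · simp only [dimRatio, gdL, gdI, gdPhi, if_pos h]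
  · simp only [dimRatio, gdL, gdI, gdPhi, if_neg h]
    rw [div_div]

end AuxGDMain


/-- Generalized dimensions are invariant under bi-Lipschitz bijections:
if `Φ : ℝⁿ → ℝⁿ` is a bijection such that `Φ` and `Φ⁻¹` are Lipschitz, then for every
`q ∈ ℝ`, `D_q^±(Φ_*μ) = D_q^±(μ)`; in particular `D_q(Φ_*μ)` exists iff `D_q(μ)` does,
with equal values. -/
theorem genDim_biLipschitz_invariant (n : ℕ)
    (μ : Measure (EuclideanSpace ℝ (Fin n))) [IsProbabilityMeasure μ]
    (Φ : EuclideanSpace ℝ (Fin n) ≃ EuclideanSpace ℝ (Fin n))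
    (K K' : NNReal) (hΦ : LipschitzWith K ⇑Φ) (hΦinv : LipschitzWith K' ⇑Φ.symm)
    (q : ℝ) :
    genDimSup (μ.map ⇑Φ) (fun x r => Metric.closedBall x r) q
        = genDimSup μ (fun x r => Metric.closedBall x r) q ∧
    genDimInf (μ.map ⇑Φ) (fun x r => Metric.closedBall x r) q
        = genDimInf μ (fun x r => Metric.closedBall x r) q ∧
    ∀ D : ℝ, (HasGenDim (μ.map ⇑Φ) (fun x r => Metric.closedBall x r) q D ↔
      HasGenDim μ (fun x r => Metric.closedBall x r) q D) := by
  have hmeasΦ : Measurable ⇑Φ := hΦ.continuous.measurable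
  haveI : IsProbabilityMeasure (μ.map ⇑Φ) := Measure.isProbabilityMeasure_map hmeasΦ.aemeasurable
  set A : NNReal := K ⊔ 1 with hAdef
  set B : NNReal := K' ⊔ 1 with hBdef
  have hA : LipschitzWith A ⇑Φ := hΦ.weaken le_sup_left
  have hB : LipschitzWith B ⇑Φ.symm := hΦinv.weaken le_sup_left
  have ha1 : (1:ℝ) ≤ (A:ℝ) := by
    have : (1:NNReal) ≤ A := le_sup_right
    exact_mod_cast this
  have hb1 : (1:ℝ) ≤ (B:ℝ) := by
    have : (1:NNReal) ≤ B := le_sup_right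
    exact_mod_cast this
  have ha0 : (0:ℝ) < (A:ℝ) := lt_of_lt_of_le one_pos ha1
  have hb0 : (0:ℝ) < (B:ℝ) := lt_of_lt_of_le one_pos hb1
  have hlow : ∀ (x : EuclideanSpace ℝ (Fin n)) (r : ℝ), 0 < r →
      μ (closedBall x (r / (A:ℝ))) ≤ (μ.map ⇑Φ) (closedBall (Φ x) r) := by
    intro x r hr
    rw [Measure.map_apply hmeasΦ measurableSet_closedBall]
    apply measure_mono
    intro y hy
    simp only [mem_closedBall, mem_preimage] at *
    calc dist (Φ y) (Φ x) ≤ (A:ℝ) * dist y x := hA.dist_le_mul y x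
    _ ≤ (A:ℝ) * (r / (A:ℝ)) := mul_le_mul_of_nonneg_left hy ha0.le
    _ = r := by rw [mul_comm]; exact div_mul_cancel₀ r ha0.ne'
  have hup : ∀ (x : EuclideanSpace ℝ (Fin n)) (r : ℝ), 0 < r →
      (μ.map ⇑Φ) (closedBall (Φ x) r) ≤ μ (closedBall x ((B:ℝ) * r)) := by
    intro x r hr
    rw [Measure.map_apply hmeasΦ measurableSet_closedBall]
    apply measure_mono
    intro y hy
    simp only [mem_closedBall, mem_preimage] at *
    have h1 : dist y x = dist (Φ.symm (Φ y)) (Φ.symm (Φ x)) := by simp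
    rw [h1]
    calc dist (Φ.symm (Φ y)) (Φ.symm (Φ x)) ≤ (B:ℝ) * dist (Φ y) (Φ x) :=
      hB.dist_le_mul _ _
    _ ≤ (B:ℝ) * r := mul_le_mul_of_nonneg_left hy hb0.le
  rcases gdMain μ hmeasΦ ha1 hb1 hlow hup q with hsand | hzero
  · obtain ⟨e1, e2, e3⟩ := gd_core ha1 hb1 hsand
      (fun r hr => gd_L_nonpos μ q hr) (fun r hr => gd_L_nonpos (μ.map ⇑Φ) q hr)
    refine ⟨?_, ?_, ?_⟩
    · simp only [genDimSup]
      rw [gd_dimRatio_eq, gd_dimRatio_eq]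
      exact e1
    · simp only [genDimInf]
      rw [gd_dimRatio_eq, gd_dimRatio_eq]
      exact e2
    · intro D
      simp only [HasGenDim]
      rw [gd_dimRatio_eq, gd_dimRatio_eq]
      exact e3 D
  · have heq : dimRatio (μ.map ⇑Φ) (fun x r => closedBall x r) q
        =ᶠ[𝓝[>](0:ℝ)] dimRatio μ (fun x r => closedBall x r) q := by
      rw [gd_dimRatio_eq, gd_dimRatio_eq]
      filter_upwards [hzero] with r hr
      rw [hr.1, hr.2]
    exact ⟨limsup_congr heq, liminf_congr heq, fun D => tendsto_congr' heq⟩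
end
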